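/- arXiv:1404.4340 — 8 statements merged into one kernel-verified Lean document; each statement's English description precedes it below -/
import Mathlib

section
/- If two words w1 and w2 are K-Knuth equivalent, then the length of the longest strictly increasing subsequence of w1 equals that of w2. -/
/-- One elementary K-Knuth relation applied inside an arbitrary context. -/
inductive KKnuthStep : List ℕ → List ℕ → Prop
  | dup (u v : List ℕ) (p : ℕ) : KKnuthStep (u ++ [p, p] ++ v) (u ++ [p] ++ v)
  | braid (u v : List ℕ) (p q : ℕ) : KKnuthStep (u ++ [p, q, p] ++ v) (u ++ [q, p, q] ++ v)
  | knuth1 (u v : List ℕ) (p s q : ℕ) (h1 : p < s) (h2 : s < q) :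
      KKnuthStep (u ++ [p, q, s] ++ v) (u ++ [q, p, s] ++ v)
  | knuth2 (u v : List ℕ) (p s q : ℕ) (h1 : p < s) (h2 : s < q) :
      KKnuthStep (u ++ [s, q, p] ++ v) (u ++ [s, p, q] ++ v)

/-- K-Knuth equivalence of words. -/
def KKnuth : List ℕ → List ℕ → Prop := Relation.EqvGen KKnuthStep

/-- Length of the longest strictly increasing subsequence of a word. -/
def lisLen (w : List ℕ) : ℕ :=
  (w.sublists.map fun l => if List.IsChain (· < ·) l then l.length else 0).foldr max 0

namespace KKaux

lemma le_foldr_max (f : List ℕ → ℕ) {l : List ℕ} {L : List (List ℕ)}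
    (h : l ∈ L) : f l ≤ (L.map f).foldr max 0 := by
  induction L with
  | nil => simp at h
  | cons a L ih =>
    simp only [List.map_cons, List.foldr_cons]
    rcases List.mem_cons.1 h with rfl | h
    · exact le_max_left _ _
    · exact le_trans (ih h) (le_max_right _ _)

lemma le_lisLen {l w : List ℕ} (hs : List.Sublist l w) (hc : List.IsChain (· < ·) l) :
    l.length ≤ lisLen w := by
  have := le_foldr_max (fun l => if List.IsChain (· < ·) l then l.length else 0)
    (List.mem_sublists.2 hs)
  simpa [hc, lisLen] using this

lemma foldr_max_spec (L : List ℕ) : L.foldr max 0 = 0 ∨ L.foldr max 0 ∈ L := by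
  induction L with
  | nil => left; rfl
  | cons a L ih =>
    simp only [List.foldr_cons]
    rcases le_total a (L.foldr max 0) with h | h
    · rw [max_eq_right h]
      rcases ih with h0 | hm
      · left; exact h0
      · right; exact List.mem_cons_of_mem _ hm
    · rw [max_eq_left h]; right; exact List.mem_cons_self

lemma lisLen_spec (w : List ℕ) :
    ∃ l, List.Sublist l w ∧ List.IsChain (· < ·) l ∧ lisLen w = l.length := by
  rcases foldr_max_spec ((w.sublists.map fun l => if List.IsChain (· < ·) l then l.length else 0)) with h | h
  · exact ⟨[], List.nil_sublist _, List.isChain_nil, h⟩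
  · rw [List.mem_map] at h
    obtain ⟨l, hl, hval⟩ := h
    by_cases hc : List.IsChain (· < ·) l
    · exact ⟨l, List.mem_sublists.1 hl, hc, by rw [lisLen, ← hval, if_pos hc]⟩
    · refine ⟨[], List.nil_sublist _, List.isChain_nil, ?_⟩
      rw [lisLen, ← hval, if_neg hc]; rfl

/-- Replacement property: any increasing sublist of `m1` can be replaced by one of `m2`. -/
def Repl (m1 m2 : List ℕ) : Prop :=
  ∀ b, List.Sublist b m1 → List.IsChain (· < ·) b →
    ∃ b', List.Sublist b' m2 ∧ List.IsChain (· < ·) b' ∧ b.length ≤ b'.length ∧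
      (∀ x, (∀ y ∈ b, x < y) → ∀ y ∈ b', x < y) ∧
      (∀ x, (∀ y ∈ b, y < x) → ∀ y ∈ b', y < x)

lemma repl_le {m1 m2 : List ℕ} (H : Repl m1 m2) (u v : List ℕ) :
    lisLen (u ++ m1 ++ v) ≤ lisLen (u ++ m2 ++ v) := by
  obtain ⟨l, hs, hc, hlen⟩ := lisLen_spec (u ++ m1 ++ v)
  rw [hlen]
  rw [List.sublist_append_iff] at hs
  obtain ⟨l1, c, rfl, hs1, hcv⟩ := hs
  rw [List.sublist_append_iff] at hs1
  obtain ⟨a, b, rfl, hau, hbm⟩ := hs1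
  rw [List.isChain_iff_pairwise, List.pairwise_append, List.pairwise_append] at hc
  obtain ⟨⟨ha, hb, hab⟩, hcc, habc⟩ := hc
  obtain ⟨b', hb'm, hb'c, hblen, Hlo, Hhi⟩ := H b hbm (List.isChain_iff_pairwise.2 hb)
  have hs' : List.Sublist ((a ++ b') ++ c) (u ++ m2 ++ v) :=
    List.Sublist.append (List.Sublist.append hau hb'm) hcv
  have hc' : List.Pairwise (· < ·) ((a ++ b') ++ c) := by
    rw [List.pairwise_append, List.pairwise_append]
    refine ⟨⟨ha, List.isChain_iff_pairwise.1 hb'c, ?_⟩, hcc, ?_⟩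
    · intro x hx
      exact Hlo x (fun y hy => hab x hx y hy)
    · intro x hx y hy
      rcases List.mem_append.1 hx with h | h
      · exact habc x (List.mem_append.2 (Or.inl h)) y hy
      · exact Hhi y (fun z hz => habc z (List.mem_append.2 (Or.inr hz)) y hy) x h
  have hle := le_lisLen hs' (List.isChain_iff_pairwise.2 hc')
  refine le_trans ?_ hle
  simp only [List.length_append]
  omega

/-- Identity replacement. -/
lemma id_case {b m2 : List ℕ} (h : List.Sublist b m2) (hc : List.IsChain (· < ·) b) :
    ∃ b', List.Sublist b' m2 ∧ List.IsChain (· < ·) b' ∧ b.length ≤ b'.length ∧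
      (∀ x, (∀ y ∈ b, x < y) → ∀ y ∈ b', x < y) ∧
      (∀ x, (∀ y ∈ b, y < x) → ∀ y ∈ b', y < x) :=
  ⟨b, h, hc, le_refl _, fun _ h => h, fun _ h => h⟩

lemma sublist2 {b : List ℕ} {x y : ℕ} (h : List.Sublist b [x, y]) :
    b = [] ∨ b = [x] ∨ b = [y] ∨ b = [x, y] := by
  simp only [List.sublist_cons_iff, List.sublist_nil] at h
  rcases h with (rfl | ⟨r, rfl, rfl⟩) | ⟨r, rfl, (rfl | ⟨r1, rfl, rfl⟩)⟩ <;> tauto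

lemma sublist3 {b : List ℕ} {x y z : ℕ} (h : List.Sublist b [x, y, z]) :
    b = [] ∨ b = [x] ∨ b = [y] ∨ b = [z] ∨ b = [x, y] ∨ b = [x, z] ∨ b = [y, z] ∨
      b = [x, y, z] := by
  simp only [List.sublist_cons_iff, List.sublist_nil] at h
  rcases h with ((rfl | ⟨r, rfl, rfl⟩) | ⟨r, rfl, (rfl | ⟨r1, rfl, rfl⟩)⟩) |
    ⟨r, rfl, ((rfl | ⟨r1, rfl, rfl⟩) | ⟨r1, rfl, (rfl | ⟨r2, rfl, rfl⟩)⟩)⟩ <;> tauto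

lemma repl_dup1 (p : ℕ) : Repl [p, p] [p] := by
  intro b hb hc
  rcases sublist2 hb with rfl | rfl | rfl | rfl
  · exact id_case (List.nil_sublist _) hc
  · exact id_case (List.Sublist.refl _) hc
  · exact id_case (List.Sublist.refl _) hc
  · simp at hc

lemma repl_dup2 (p : ℕ) : Repl [p] [p, p] := by
  intro b hb hc
  have h2 : List.Sublist [p] [p, p] := (List.Sublist.refl [p]).cons p
  rcases List.sublist_cons_iff.1 hb with h | ⟨r, rfl, hr⟩
  · rw [List.sublist_nil] at h; subst h
    exact id_case (List.nil_sublist _) hc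
  · rw [List.sublist_nil] at hr; subst hr
    exact id_case h2 hc

lemma repl_braid (p q : ℕ) : Repl [p, q, p] [q, p, q] := by
  intro b hb hc
  rcases sublist3 hb with rfl | rfl | rfl | rfl | rfl | rfl | rfl | rfl
  · exact id_case (List.nil_sublist _) hc
  · exact id_case ((List.Sublist.refl [p]).cons q |>.cons₂ q |> fun h => by
      exact ((List.nil_sublist [q]).cons₂ p).cons q) hc
  · exact id_case (((List.nil_sublist [q]).cons p).cons₂ q) hc
  · exact id_case (((List.nil_sublist [q]).cons₂ p).cons q) hc
  · -- b = [p, q]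
    exact id_case ((List.Sublist.refl [p, q]).cons q) hc
  · simp at hc
  · -- b = [q, p]
    exact id_case (((List.nil_sublist [q]).cons₂ p).cons₂ q) hc
  · simp at hc; omega

lemma repl_k1a (p s q : ℕ) (h1 : p < s) (h2 : s < q) : Repl [p, q, s] [q, p, s] := by
  intro b hb hc
  rcases sublist3 hb with rfl | rfl | rfl | rfl | rfl | rfl | rfl | rfl
  · exact id_case (List.nil_sublist _) hc
  · exact id_case (((List.nil_sublist [s]).cons₂ p).cons q) hc
  · exact id_case (((List.nil_sublist [s]).cons p).cons₂ q) hc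
  · exact id_case (((List.Sublist.refl [s]).cons p).cons q) hc
  · -- b = [p, q]  ↦  b' = [p, s]
    refine ⟨[p, s], ((List.Sublist.refl [p, s]).cons q), by simp [h1], by simp, ?_, ?_⟩
    · intro x hx y hy
      simp at hx hy
      rcases hy with rfl | rfl
      · exact hx.1
      · omega
    · intro x hx y hy
      simp at hx hy
      rcases hy with rfl | rfl
      · exact hx.1
      · omega
  · exact id_case (((List.Sublist.refl [s]).cons₂ p).cons q) hc
  · simp at hc; omega
  · simp at hc; omega

lemma repl_k1b (p s q : ℕ) (h1 : p < s) (h2 : s < q) : Repl [q, p, s] [p, q, s] := by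
  intro b hb hc
  rcases sublist3 hb with rfl | rfl | rfl | rfl | rfl | rfl | rfl | rfl
  · exact id_case (List.nil_sublist _) hc
  · exact id_case (((List.nil_sublist [s]).cons p).cons₂ q |> fun _ =>
      ((List.nil_sublist [s]).cons₂ q).cons p) hc
  · exact id_case (((List.nil_sublist [s]).cons q).cons₂ p) hc
  · exact id_case (((List.Sublist.refl [s]).cons q).cons p) hc
  · simp at hc; omega
  · simp at hc; omega
  · -- b = [p, s]
    exact id_case (((List.Sublist.refl [s]).cons₂ p |> fun _ =>
      ((List.Sublist.refl [s]).cons q).cons₂ p)) hc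
  · simp at hc; omega

lemma repl_k2a (p s q : ℕ) (h1 : p < s) (h2 : s < q) : Repl [s, q, p] [s, p, q] := by
  intro b hb hc
  rcases sublist3 hb with rfl | rfl | rfl | rfl | rfl | rfl | rfl | rfl
  · exact id_case (List.nil_sublist _) hc
  · exact id_case (((List.nil_sublist [q]).cons p).cons₂ s) hc
  · exact id_case (((List.nil_sublist [q]).cons₂ p).cons s |> fun _ =>
      ((List.Sublist.refl [q]).cons p).cons s) hc
  · exact id_case (((List.nil_sublist [q]).cons₂ p).cons s) hc
  · -- b = [s, q]
    exact id_case (((List.Sublist.refl [q]).cons p).cons₂ s) hc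
  · simp at hc; omega
  · simp at hc; omega
  · simp at hc; omega

lemma repl_k2b (p s q : ℕ) (h1 : p < s) (h2 : s < q) : Repl [s, p, q] [s, q, p] := by
  intro b hb hc
  rcases sublist3 hb with rfl | rfl | rfl | rfl | rfl | rfl | rfl | rfl
  · exact id_case (List.nil_sublist _) hc
  · exact id_case (((List.nil_sublist [p]).cons q).cons₂ s) hc
  · exact id_case (((List.Sublist.refl [p]).cons q).cons s) hc
  · exact id_case (((List.nil_sublist [p]).cons₂ q).cons s) hc
  · simp at hc; omega
  · -- b = [s, q]
    exact id_case (((List.nil_sublist [p]).cons₂ q).cons₂ s) hc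
  · -- b = [p, q]  ↦  b' = [s, q]
    refine ⟨[s, q], ((List.nil_sublist [p]).cons₂ q).cons₂ s, by simp [h2], by simp, ?_, ?_⟩
    · intro x hx y hy
      simp at hx hy
      rcases hy with rfl | rfl
      · omega
      · exact hx.2
    · intro x hx y hy
      simp at hx hy
      rcases hy with rfl | rfl
      · omega
      · exact hx.2
  · simp at hc; omega

lemma step_eq {w1 w2 : List ℕ} (h : KKnuthStep w1 w2) : lisLen w1 = lisLen w2 := by
  cases h with
  | dup u v p => exact le_antisymm (repl_le (repl_dup1 p) u v) (repl_le (repl_dup2 p) u v)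
  | braid u v p q => exact le_antisymm (repl_le (repl_braid p q) u v) (repl_le (repl_braid q p) u v)
  | knuth1 u v p s q h1 h2 =>
      exact le_antisymm (repl_le (repl_k1a p s q h1 h2) u v) (repl_le (repl_k1b p s q h1 h2) u v)
  | knuth2 u v p s q h1 h2 =>
      exact le_antisymm (repl_le (repl_k2a p s q h1 h2) u v) (repl_le (repl_k2b p s q h1 h2) u v)

end KKaux

theorem kknuth_lis_invariant (w1 w2 : List ℕ) (h : KKnuth w1 w2) :
    lisLen w1 = lisLen w2 := by
  induction h with
  | rel a b hab => exact KKaux.step_eq hab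
  | refl a => rfl
  | symm a b _ ih => exact ih.symm
  | trans a b c _ _ ih1 ih2 => exact ih1.trans ih2
end

section
/- If two words w1 and w2 are K-Knuth equivalent, then the length of the longest strictly decreasing subsequence of w1 equals that of w2. -/
/-- Length of the longest strictly decreasing subsequence of a word. -/
def ldsLen (w : List ℕ) : ℕ :=
  (w.sublists.map fun l => if List.IsChain (· > ·) l then l.length else 0).foldr max 0

open List

lemma myFoldrMaxLe {l : List ℕ} {n : ℕ} : l.foldr max 0 ≤ n ↔ ∀ x ∈ l, x ≤ n := by
  induction l with
  | nil => simp
  | cons a l ih => simp [ih]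

lemma myLengthLeLds {w t : List ℕ} (ht : t <+ w) (hc : IsChain (· > ·) t) :
    t.length ≤ ldsLen w := by
  have hm : (if List.IsChain (· > ·) t then t.length else 0) ∈
      (w.sublists.map fun l => if List.IsChain (· > ·) l then l.length else 0) :=
    mem_map_of_mem (mem_sublists.2 ht)
  have := (myFoldrMaxLe (n := ldsLen w)).mp le_rfl _ hm
  simpa [hc] using this

lemma myLdsLe {w : List ℕ} {n : ℕ}
    (h : ∀ t, t <+ w → IsChain (· > ·) t → t.length ≤ n) : ldsLen w ≤ n := by
  rw [ldsLen, myFoldrMaxLe]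
  intro x hx
  rcases mem_map.1 hx with ⟨l, hl, rfl⟩
  split
  · exact h l (mem_sublists.1 hl) ‹_›
  · exact Nat.zero_le n

lemma myGetLast? {l : List ℕ} (h : l ≠ []) : l.getLast? = some (l.getLastD 0) := by
  rw [getLastD_eq_getLast?, getLast?_eq_getLast h]; rfl

lemma myHead? {l : List ℕ} (h : l ≠ []) : l.head? = some l.headI := by
  cases l with
  | nil => exact absurd rfl h
  | cons a l => rfl

/-- Replacement relation strong enough to preserve lds in context. -/
def Reflect (a b : List ℕ) : Prop :=
  ∀ s, s <+ a → IsChain (· > ·) s →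
    ∃ t, t <+ b ∧ IsChain (· > ·) t ∧ t.length = s.length ∧
      t.headI ≤ s.headI ∧ s.getLastD 0 ≤ t.getLastD 0

lemma reflect_mono {a b : List ℕ} (R : Reflect a b) (u v : List ℕ) :
    ldsLen (u ++ a ++ v) ≤ ldsLen (u ++ b ++ v) := by
  apply myLdsLe
  intro s hs hc
  rw [append_assoc, sublist_append_iff] at hs
  obtain ⟨lu, rest, rfl, hlu, hrest⟩ := hs
  rw [sublist_append_iff] at hrest
  obtain ⟨la, lv, rfl, hla, hlv⟩ := hrest
  rw [isChain_append] at hc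
  obtain ⟨hcu, hcrest, hlink1⟩ := hc
  rw [isChain_append] at hcrest
  obtain ⟨hca, hcv, hlink2⟩ := hcrest
  obtain ⟨t, htb, hct, hlen, hhead, hlast⟩ := R la hla hca
  have hsub : lu ++ (t ++ lv) <+ u ++ b ++ v := by
    rw [append_assoc]
    exact hlu.append (htb.append hlv)
  have hchain : IsChain (· > ·) (lu ++ (t ++ lv)) := by
    rw [isChain_append]
    refine ⟨hcu, ?_, ?_⟩
    · rw [isChain_append]
      refine ⟨hct, hcv, ?_⟩
      intro x hx y hy
      have hne : t ≠ [] := by rintro rfl; simp at hx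
      have hlane : la ≠ [] := by
        rintro rfl; simp at hlen; exact hne hlen
      have h1 : la.getLastD 0 > y := hlink2 _ (by rw [myGetLast? hlane]; rfl) y hy
      have h2 : x = t.getLastD 0 := by
        rw [myGetLast? hne] at hx; exact Option.some_inj.mp hx.symm
      omega
    · intro x hx y hy
      cases t with
      | nil =>
        have hlane : la = [] := by simpa using length_eq_zero_iff.mp hlen.symm
        subst hlane
        exact hlink1 x hx y hy
      | cons c t' =>
        have hlane : la ≠ [] := by rintro rfl; simp at hlen
        have h1 : x > la.headI := by
          apply hlink1 x hx
          rw [head?_append_of_ne_nil _ hlane, myHead? hlane]; rfl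
        have h2 : c = y := by simpa using hy
        have h3 : c ≤ la.headI := by simpa using hhead
        omega
  have := myLengthLeLds hsub hchain
  simpa [hlen] using this

lemma step_lds (w1 w2 : List ℕ) (h : KKnuthStep w1 w2) : ldsLen w1 = ldsLen w2 := by
  cases h with
  | dup u v p =>
    apply Nat.le_antisymm <;> apply reflect_mono <;> intro s hs hc <;>
      simp only [sublist_cons_iff, sublist_nil] at hs
    · rcases hs with (rfl | ⟨r, rfl, rfl⟩) | ⟨r, rfl, (rfl | ⟨r', rfl, rfl⟩)⟩
      · exact ⟨[], by simp, by simp, rfl, le_rfl, le_rfl⟩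
      · exact ⟨[p], by simp, by simp, rfl, le_rfl, le_rfl⟩
      · exact ⟨[p], by simp, by simp, rfl, le_rfl, le_rfl⟩
      · exfalso; simp [isChain_cons_cons] at hc
    · rcases hs with rfl | ⟨r, rfl, rfl⟩
      · exact ⟨[], by simp, by simp, rfl, le_rfl, le_rfl⟩
      · exact ⟨[p], by simp [sublist_cons_iff], by simp, rfl, le_rfl, le_rfl⟩
  | braid u v p q =>
    apply Nat.le_antisymm <;> apply reflect_mono <;> intro t ht hc <;>
      simp only [sublist_cons_iff, sublist_nil] at ht <;>
      rcases ht with ((rfl | ⟨r, rfl, rfl⟩) | ⟨r, rfl, (rfl | ⟨r', rfl, rfl⟩)⟩) |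
        ⟨r, rfl, ((rfl | ⟨r', rfl, rfl⟩) | ⟨r', rfl, (rfl | ⟨r'', rfl, rfl⟩)⟩)⟩ <;>
      first
        | (exfalso; simp [isChain_cons_cons] at hc; omega)
        | (exfalso; simp [isChain_cons_cons] at hc; done)
        | (refine ⟨_, ?_, hc, rfl, le_rfl, le_rfl⟩; simp [sublist_cons_iff]; done)
  | knuth1 u v p s q h1 h2 =>
    apply Nat.le_antisymm <;> apply reflect_mono <;> intro t ht hc <;>
      simp only [sublist_cons_iff, sublist_nil] at ht <;>
      rcases ht with ((rfl | ⟨r, rfl, rfl⟩) | ⟨r, rfl, (rfl | ⟨r', rfl, rfl⟩)⟩) |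
        ⟨r, rfl, ((rfl | ⟨r', rfl, rfl⟩) | ⟨r', rfl, (rfl | ⟨r'', rfl, rfl⟩)⟩)⟩ <;>
      first
        | (exfalso; simp [isChain_cons_cons] at hc; omega)
        | (exfalso; simp [isChain_cons_cons] at hc; done)
        | (refine ⟨_, ?_, hc, rfl, le_rfl, le_rfl⟩; simp [sublist_cons_iff]; done)
        | (refine ⟨[q, s], ?_, ?_, rfl, le_rfl, ?_⟩ <;>
            simp [sublist_cons_iff, isChain_cons_cons] <;> omega)
  | knuth2 u v p s q h1 h2 =>
    apply Nat.le_antisymm <;> apply reflect_mono <;> intro t ht hc <;>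
      simp only [sublist_cons_iff, sublist_nil] at ht <;>
      rcases ht with ((rfl | ⟨r, rfl, rfl⟩) | ⟨r, rfl, (rfl | ⟨r', rfl, rfl⟩)⟩) |
        ⟨r, rfl, ((rfl | ⟨r', rfl, rfl⟩) | ⟨r', rfl, (rfl | ⟨r'', rfl, rfl⟩)⟩)⟩ <;>
      first
        | (exfalso; simp [isChain_cons_cons] at hc; omega)
        | (exfalso; simp [isChain_cons_cons] at hc; done)
        | (refine ⟨_, ?_, hc, rfl, le_rfl, le_rfl⟩; simp [sublist_cons_iff]; done)
        | (refine ⟨[s, p], ?_, ?_, rfl, ?_, le_rfl⟩ <;>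
            simp [sublist_cons_iff, isChain_cons_cons] <;> omega)

theorem kknuth_lds_invariant (w1 w2 : List ℕ) (h : KKnuth w1 w2) :
    ldsLen w1 = ldsLen w2 := by
  induction h with
  | rel x y hxy => exact step_lds x y hxy
  | refl x => rfl
  | symm x y _ ih => exact ih.symm
  | trans x y z _ _ ih1 ih2 => exact ih1.trans ih2
end

section
/- The words 34124 and 3124 are K-Knuth equivalent. -/
theorem kknuth_34124_3124 : KKnuth [3, 4, 1, 2, 4] [3, 1, 2, 4] := by
  have s1 : KKnuthStep [3, 4, 1, 2, 4] [3, 1, 4, 2, 4] :=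
    KKnuthStep.knuth2 [] [2, 4] 1 3 4 (by norm_num) (by norm_num)
  have s2 : KKnuthStep [3, 1, 4, 2, 4] [3, 1, 2, 4, 2] :=
    KKnuthStep.braid [3, 1] [] 4 2
  have s3 : KKnuthStep [1, 3, 2, 4, 2] [3, 1, 2, 4, 2] :=
    KKnuthStep.knuth1 [] [4, 2] 1 2 3 (by norm_num) (by norm_num)
  have s4 : KKnuthStep [1, 3, 2, 4, 2] [1, 3, 4, 2, 4] :=
    KKnuthStep.braid [1, 3] [] 2 4
  have s5 : KKnuthStep [1, 3, 4, 2, 4] [1, 3, 2, 4, 4] :=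
    KKnuthStep.knuth2 [1] [4] 2 3 4 (by norm_num) (by norm_num)
  have s6 : KKnuthStep [1, 3, 2, 4, 4] [3, 1, 2, 4, 4] :=
    KKnuthStep.knuth1 [] [4, 4] 1 2 3 (by norm_num) (by norm_num)
  have s7 : KKnuthStep [3, 1, 2, 4, 4] [3, 1, 2, 4] :=
    KKnuthStep.dup [3, 1, 2] [] 4
  exact .trans _ _ _ (.rel _ _ s1) (.trans _ _ _ (.rel _ _ s2)
    (.trans _ _ _ (.symm _ _ (.rel _ _ s3)) (.trans _ _ _ (.rel _ _ s4)
    (.trans _ _ _ (.rel _ _ s5) (.trans _ _ _ (.rel _ _ s6) (.rel _ _ s7))))))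
end

section
/- K-Knuth equivalence restricts to intervals: if I is an interval of positive integers and w ≡ w', then w|_I ≡ w'|_I, where w|_I is the subword of letters lying in I. -/
lemma kknuth_filter_step (a b : ℕ) {w w' : List ℕ} (h : KKnuthStep w w') :
    KKnuth (w.filter fun x => decide (a ≤ x ∧ x ≤ b))
      (w'.filter fun x => decide (a ≤ x ∧ x ≤ b)) := by
  set f : ℕ → Bool := fun x => decide (a ≤ x ∧ x ≤ b) with hf
  cases h with
  | dup u v p =>
    by_cases hp : f p = true
    · have := Relation.EqvGen.rel _ _ (KKnuthStep.dup (u.filter f) (v.filter f) p)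
      simp only [List.filter_append, List.filter_cons, List.filter_nil, hp, if_true] at this ⊢
      simpa [KKnuth] using this
    · simp only [List.filter_append, List.filter_cons, List.filter_nil, hp, if_false]
      exact Relation.EqvGen.refl _
  | braid u v p q =>
    by_cases hp : f p = true <;> by_cases hq : f q = true
    · have := Relation.EqvGen.rel _ _ (KKnuthStep.braid (u.filter f) (v.filter f) p q)
      simp only [List.filter_append, List.filter_cons, List.filter_nil, hp, hq, if_true] at this ⊢
      simpa [KKnuth] using this
    · have := Relation.EqvGen.rel _ _ (KKnuthStep.dup (u.filter f) (v.filter f) p)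
      simp only [List.filter_append, List.filter_cons, List.filter_nil, hp, hq,
        if_true, if_false] at this ⊢
      simpa [KKnuth] using this
    · have := Relation.EqvGen.symm _ _
        (Relation.EqvGen.rel _ _ (KKnuthStep.dup (u.filter f) (v.filter f) q))
      simp only [List.filter_append, List.filter_cons, List.filter_nil, hp, hq,
        if_true, if_false] at this ⊢
      simpa [KKnuth] using this
    · simp only [List.filter_append, List.filter_cons, List.filter_nil, hp, hq, if_false]
      exact Relation.EqvGen.refl _
  | knuth1 u v p s q h1 h2 =>
    by_cases hp : f p = true <;> by_cases hq : f q = true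
    · have hs : f s = true := by
        simp only [hf, decide_eq_true_eq] at hp hq ⊢
        omega
      have := Relation.EqvGen.rel _ _
        (KKnuthStep.knuth1 (u.filter f) (v.filter f) p s q h1 h2)
      simp only [List.filter_append, List.filter_cons, List.filter_nil, hp, hq, hs,
        if_true] at this ⊢
      simpa [KKnuth] using this
    · simp only [List.filter_append, List.filter_cons, List.filter_nil, hp, hq,
        if_true, if_false]
      exact Relation.EqvGen.refl _
    · simp only [List.filter_append, List.filter_cons, List.filter_nil, hp, hq,
        if_true, if_false]
      exact Relation.EqvGen.refl _
    · simp only [List.filter_append, List.filter_cons, List.filter_nil, hp, hq, if_false]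
      exact Relation.EqvGen.refl _
  | knuth2 u v p s q h1 h2 =>
    by_cases hp : f p = true <;> by_cases hq : f q = true
    · have hs : f s = true := by
        simp only [hf, decide_eq_true_eq] at hp hq ⊢
        omega
      have := Relation.EqvGen.rel _ _
        (KKnuthStep.knuth2 (u.filter f) (v.filter f) p s q h1 h2)
      simp only [List.filter_append, List.filter_cons, List.filter_nil, hp, hq, hs,
        if_true] at this ⊢
      simpa [KKnuth] using this
    · simp only [List.filter_append, List.filter_cons, List.filter_nil, hp, hq,
        if_true, if_false]
      exact Relation.EqvGen.refl _
    · simp only [List.filter_append, List.filter_cons, List.filter_nil, hp, hq,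
        if_true, if_false]
      exact Relation.EqvGen.refl _
    · simp only [List.filter_append, List.filter_cons, List.filter_nil, hp, hq, if_false]
      exact Relation.EqvGen.refl _

theorem kknuth_restrict_interval (a b : ℕ) (w w' : List ℕ) (h : KKnuth w w') :
    KKnuth (w.filter fun x => decide (a ≤ x ∧ x ≤ b))
      (w'.filter fun x => decide (a ≤ x ∧ x ≤ b)) := by
  induction h with
  | rel x y hxy => exact kknuth_filter_step a b hxy
  | refl x => exact Relation.EqvGen.refl _
  | symm x y _ ih => exact Relation.EqvGen.symm _ _ ih
  | trans x y z _ _ ih1 ih2 => exact Relation.EqvGen.trans _ _ _ ih1 ih2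
end

section
/- K-Knuth equivalence commutes with standardization: if w ≡ w' then the standardizations satisfy st(w) ≡ st(w'), where st(w) replaces the k-th smallest distinct letter value of w by k. -/
/-- Standardization of a word: the k-th smallest distinct letter value becomes k. -/
def st (w : List ℕ) : List ℕ := w.map fun x => (w.toFinset.filter (· ≤ x)).card

lemma card_filter_lt {S : Finset ℕ} {a b : ℕ} (hb : b ∈ S) (hab : a < b) :
    (S.filter (· ≤ a)).card < (S.filter (· ≤ b)).card := by
  apply Finset.card_lt_card
  constructor
  · intro x hx
    simp only [Finset.mem_filter] at *
    exact ⟨hx.1, hx.2.trans hab.le⟩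
  · intro hsub
    have := hsub (Finset.mem_filter.mpr ⟨hb, le_refl b⟩)
    simp only [Finset.mem_filter] at this
    omega

lemma step_st {w w' : List ℕ} (h : KKnuthStep w w') : KKnuthStep (st w) (st w') := by
  cases h with
  | dup u v p =>
      have hS : (u ++ [p, p] ++ v).toFinset = (u ++ [p] ++ v).toFinset := by
        ext x; simp; try tauto
      let f : ℕ → ℕ := fun x => ((u ++ [p, p] ++ v).toFinset.filter (· ≤ x)).card
      have h1 : st (u ++ [p, p] ++ v) = u.map f ++ [f p, f p] ++ v.map f := by
        simp only [st, f, List.map_append, List.map_cons, List.map_nil]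
      have h2 : st (u ++ [p] ++ v) = u.map f ++ [f p] ++ v.map f := by
        simp only [st, f, ← hS, List.map_append, List.map_cons, List.map_nil]
      rw [h1, h2]
      exact KKnuthStep.dup _ _ _
  | braid u v p q =>
      have hS : (u ++ [p, q, p] ++ v).toFinset = (u ++ [q, p, q] ++ v).toFinset := by
        ext x; simp; try tauto
      let f : ℕ → ℕ := fun x => ((u ++ [p, q, p] ++ v).toFinset.filter (· ≤ x)).card
      have h1 : st (u ++ [p, q, p] ++ v) = u.map f ++ [f p, f q, f p] ++ v.map f := by
        simp only [st, f, List.map_append, List.map_cons, List.map_nil]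
      have h2 : st (u ++ [q, p, q] ++ v) = u.map f ++ [f q, f p, f q] ++ v.map f := by
        simp only [st, f, ← hS, List.map_append, List.map_cons, List.map_nil]
      rw [h1, h2]
      exact KKnuthStep.braid _ _ _ _
  | knuth1 u v p s q hps hsq =>
      have hS : (u ++ [p, q, s] ++ v).toFinset = (u ++ [q, p, s] ++ v).toFinset := by
        ext x; simp; try tauto
      let f : ℕ → ℕ := fun x => ((u ++ [p, q, s] ++ v).toFinset.filter (· ≤ x)).card
      have hsS : s ∈ (u ++ [p, q, s] ++ v).toFinset := by simp
      have hqS : q ∈ (u ++ [p, q, s] ++ v).toFinset := by simp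
      have h1 : st (u ++ [p, q, s] ++ v) = u.map f ++ [f p, f q, f s] ++ v.map f := by
        simp only [st, f, List.map_append, List.map_cons, List.map_nil]
      have h2 : st (u ++ [q, p, s] ++ v) = u.map f ++ [f q, f p, f s] ++ v.map f := by
        simp only [st, f, ← hS, List.map_append, List.map_cons, List.map_nil]
      rw [h1, h2]
      exact KKnuthStep.knuth1 _ _ _ _ _ (card_filter_lt hsS hps) (card_filter_lt hqS hsq)
  | knuth2 u v p s q hps hsq =>
      have hS : (u ++ [s, q, p] ++ v).toFinset = (u ++ [s, p, q] ++ v).toFinset := by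
        ext x; simp; try tauto
      let f : ℕ → ℕ := fun x => ((u ++ [s, q, p] ++ v).toFinset.filter (· ≤ x)).card
      have hsS : s ∈ (u ++ [s, q, p] ++ v).toFinset := by simp
      have hqS : q ∈ (u ++ [s, q, p] ++ v).toFinset := by simp
      have h1 : st (u ++ [s, q, p] ++ v) = u.map f ++ [f s, f q, f p] ++ v.map f := by
        simp only [st, f, List.map_append, List.map_cons, List.map_nil]
      have h2 : st (u ++ [s, p, q] ++ v) = u.map f ++ [f s, f p, f q] ++ v.map f := by
        simp only [st, f, ← hS, List.map_append, List.map_cons, List.map_nil]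
      rw [h1, h2]
      exact KKnuthStep.knuth2 _ _ _ _ _ (card_filter_lt hsS hps) (card_filter_lt hqS hsq)

theorem kknuth_standardize (w w' : List ℕ) (h : KKnuth w w') : KKnuth (st w) (st w') := by
  induction h with
  | rel a b hab => exact Relation.EqvGen.rel _ _ (step_st hab)
  | refl a => exact Relation.EqvGen.refl _
  | symm a b _ ih => exact Relation.EqvGen.symm _ _ ih
  | trans a b c _ _ ih1 ih2 => exact Relation.EqvGen.trans _ _ _ ih1 ih2
end

section
/- The shuffle product of fundamental quasisymmetric functions indexed by descent compositions satisfies: L_{C(w')} · L_{C(w'')} = Σ_{w ∈ Sh(w', w''[n])} L_{C(w)}, where w' is a word on alphabet [n] with distinct standardization behavior, w''[n] is w'' with all letters increased by n, and Sh denotes the set of shuffles. -/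
/-- The fundamental quasisymmetric function `L_{C(w)}` indexed by the descent
composition of the word `w`, as a formal power series in variables `x_0, x_1, …`:
the sum of `x_{i_1} ⋯ x_{i_l}` over weakly increasing sequences `i_1 ≤ … ≤ i_l`
(`l` the length of `w`) which increase strictly at each descent of `w`.
It is given coefficientwise: the coefficient of a monomial `d` is the number of
such sequences with multiplicity profile `d`. -/
noncomputable def Lw (w : List ℕ) : MvPowerSeries ℕ ℚ :=
  fun d => (Set.ncard {s : Fin w.length → ℕ |
    Monotone s ∧
    (∀ i : ℕ, ∀ hi : i + 1 < w.length, w.getD (i + 1) 0 < w.getD i 0 →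
      s ⟨i, Nat.lt_of_succ_lt hi⟩ < s ⟨i + 1, hi⟩) ∧
    (∀ k : ℕ, d k = (Finset.univ.filter fun j => s j = k).card)} : ℚ)

/-- A shuffle of two words. -/
inductive IsShuffle : List ℕ → List ℕ → List ℕ → Prop
  | nil : IsShuffle [] [] []
  | left {a : ℕ} {u v w : List ℕ} : IsShuffle u v w → IsShuffle (a :: u) v (a :: w)
  | right {a : ℕ} {u v w : List ℕ} : IsShuffle u v w → IsShuffle u (a :: v) (a :: w)

namespace FSP

open List

/-- The P-partition compatibility relation on (letter, value) pairs. -/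
def Rel : ℕ × ℕ → ℕ × ℕ → Prop := fun p q => p.2 ≤ q.2 ∧ (q.1 < p.1 → p.2 < q.2)

instance : IsTrans (ℕ × ℕ) Rel := by
  constructor
  rintro a b c ⟨h1, h2⟩ ⟨h3, h4⟩
  constructor
  · omega
  · intro hca
    rcases lt_or_ge c.1 b.1 with h | h
    · have := h4 h; omega
    · have := h2 (by omega); omega

/-- The merging order: compare values, break ties by putting small letters (≤ n) first. -/
def ple (n : ℕ) (p q : ℕ × ℕ) : Bool :=
  decide (p.2 < q.2) || (decide (p.2 = q.2) && (decide (p.1 ≤ n) || decide (n < q.1)))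

lemma ple_iff {n : ℕ} {p q : ℕ × ℕ} :
    ple n p q = true ↔ p.2 < q.2 ∨ (p.2 = q.2 ∧ (p.1 ≤ n ∨ n < q.1)) := by
  simp [ple]

lemma ple_trans (n : ℕ) : ∀ a b c : ℕ × ℕ, ple n a b → ple n b c → ple n a c := by
  intro a b c hab hbc
  rw [ple_iff] at *
  omega

lemma ple_total (n : ℕ) : ∀ a b : ℕ × ℕ, ple n a b || ple n b a := by
  intro a b
  rcases Nat.lt_trichotomy a.2 b.2 with h | h | h
  · simp [ple_iff, h]
  · rcases le_or_gt a.1 n with h' | h' <;> simp [ple_iff, h] <;> omega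
  · simp [ple_iff, h]

lemma Rel.ple {n : ℕ} {p q : ℕ × ℕ} (h : Rel p q) : ple n p q = true := by
  rcases h with ⟨h1, h2⟩
  rw [ple_iff]
  rcases Nat.lt_or_ge p.2 q.2 with h | h
  · exact Or.inl h
  · have he : p.2 = q.2 := by omega
    have : ¬ q.1 < p.1 := fun hc => by have := h2 hc; omega
    right
    refine ⟨he, ?_⟩
    omega

/-- Generic interleaving predicate. -/
inductive Interleave {α : Type*} : List α → List α → List α → Prop
  | nil : Interleave [] [] []
  | left {a : α} {u v w : List α} : Interleave u v w → Interleave (a :: u) v (a :: w)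
  | right {a : α} {u v w : List α} : Interleave u v w → Interleave u (a :: v) (a :: w)

lemma Interleave.isShuffle {u v w : List ℕ} (h : Interleave u v w) : IsShuffle u v w := by
  induction h with
  | nil => exact .nil
  | left _ ih => exact .left ih
  | right _ ih => exact .right ih

lemma isShuffle_interleave {u v w : List ℕ} (h : IsShuffle u v w) : Interleave u v w := by
  induction h with
  | nil => exact .nil
  | left _ ih => exact .left ih
  | right _ ih => exact .right ih

lemma Interleave.perm {α : Type*} {u v w : List α} (h : Interleave u v w) : w.Perm (u ++ v) := by
  induction h with
  | nil => rfl
  | left _ ih => exact ih.cons _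
  | right _ ih => exact (ih.cons _).trans List.perm_middle.symm

lemma Interleave.mem_or {α : Type*} {u v w : List α} (h : Interleave u v w) {x : α}
    (hx : x ∈ w) : x ∈ u ∨ x ∈ v := by
  have := h.perm.mem_iff.1 hx
  simpa using this

lemma Interleave.map {α β : Type*} (f : α → β) {u v w : List α} (h : Interleave u v w) :
    Interleave (u.map f) (v.map f) (w.map f) := by
  induction h with
  | nil => exact .nil
  | left _ ih => exact .left ih
  | right _ ih => exact .right ih

lemma interleave_nil_left {α : Type*} : ∀ v : List α, Interleave [] v v
  | [] => .nil
  | _ :: v => .right (interleave_nil_left v)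

lemma interleave_nil_right {α : Type*} : ∀ u : List α, Interleave u [] u
  | [] => .nil
  | _ :: u => .left (interleave_nil_right u)

lemma interleave_merge {α : Type*} (le : α → α → Bool) :
    ∀ u v : List α, Interleave u v (u.merge v le)
  | [], v => by rw [List.nil_merge]; exact interleave_nil_left v
  | a :: u, [] => by rw [List.merge_right]; exact interleave_nil_right (a :: u)
  | a :: u, b :: v => by
    rw [List.cons_merge_cons]
    split
    · exact .left (interleave_merge le u (b :: v))
    · exact .right (interleave_merge le (a :: u) v)
  termination_by u v => u.length + v.length

lemma Interleave.filter_eq {α : Type*} {P : α → Bool} :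
    ∀ {u v w : List α}, Interleave u v w → (∀ x ∈ u, P x = true) → (∀ x ∈ v, P x = false) →
    w.filter P = u ∧ w.filter (fun x => !P x) = v := by
  intro u v w h
  induction h with
  | nil => simp
  | @left a u v w h ih =>
    intro hu hv
    have ha : P a = true := hu a mem_cons_self
    have := ih (fun x hx => hu x (mem_cons_of_mem _ hx)) hv
    simp [List.filter_cons, ha, this.1, this.2]
  | @right a u v w h ih =>
    intro hu hv
    have ha : P a = false := hv a mem_cons_self
    have := ih hu (fun x hx => hv x (mem_cons_of_mem _ hx))
    simp [List.filter_cons, ha, this.1, this.2]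

lemma Interleave.pairwiseR {α : Type*} {Rr S : α → α → Prop} :
    ∀ {u v w : List α}, Interleave u v w → Pairwise Rr u → Pairwise Rr v → Pairwise S w →
      (∀ a b, a ∈ u → b ∈ v → S a b → Rr a b) →
      (∀ a b, a ∈ v → b ∈ u → S a b → Rr a b) → Pairwise Rr w := by
  intro u v w h
  induction h with
  | nil => intros; exact .nil
  | @left a u v w h ih =>
    intro h1 h2 hS c c'
    rcases pairwise_cons.1 h1 with ⟨ha, h1'⟩
    rcases pairwise_cons.1 hS with ⟨hSa, hS'⟩
    refine pairwise_cons.2 ⟨?_, ih h1' h2 hS'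
      (fun x y hx hy => c x y (mem_cons_of_mem _ hx) hy)
      (fun x y hx hy => c' x y hx (mem_cons_of_mem _ hy))⟩
    intro b hb
    rcases h.mem_or hb with hbu | hbv
    · exact ha b hbu
    · exact c a b mem_cons_self hbv (hSa b hb)
  | @right a u v w h ih =>
    intro h1 h2 hS c c'
    rcases pairwise_cons.1 h2 with ⟨ha, h2'⟩
    rcases pairwise_cons.1 hS with ⟨hSa, hS'⟩
    refine pairwise_cons.2 ⟨?_, ih h1 h2' hS'
      (fun x y hx hy => c x y hx (mem_cons_of_mem _ hy))
      (fun x y hx hy => c' x y (mem_cons_of_mem _ hx) hy)⟩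
    intro b hb
    rcases h.mem_or hb with hbu | hbv
    · exact c' a b mem_cons_self hbu (hSa b hb)
    · exact ha b hbv

lemma merge_split (n : ℕ) :
    ∀ L : List (ℕ × ℕ), Pairwise (fun p q => ple n p q = true) L →
      ((L.filter fun p => decide (p.1 ≤ n)).merge
        (L.filter fun p => !(decide (p.1 ≤ n))) (ple n)) = L := by
  intro L
  induction L with
  | nil => simp
  | cons a L ih =>
    intro h
    rcases pairwise_cons.1 h with ⟨ha, hL⟩
    by_cases hc : a.1 ≤ n
    · rw [List.filter_cons_of_pos (by simpa using hc), List.filter_cons_of_neg (by simpa using hc)]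
      cases hf : (L.filter fun p => !(decide (p.1 ≤ n))) with
      | nil => rw [hf] at ih; rw [List.merge_right] at ih ⊢; rw [ih hL]
      | cons b r =>
        have hb : b ∈ L := mem_of_mem_filter (hf ▸ (mem_cons_self : b ∈ b :: r))
        rw [List.cons_merge_cons, if_pos (ha b hb), ← hf, ih hL]
    · rw [List.filter_cons_of_neg (by simpa using hc), List.filter_cons_of_pos (by simpa using hc)]
      cases hf : (L.filter fun p => decide (p.1 ≤ n)) with
      | nil => rw [hf] at ih; rw [List.nil_merge] at ih ⊢; rw [ih hL]
      | cons b r =>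
        have hb : b ∈ L := mem_of_mem_filter (hf ▸ (mem_cons_self : b ∈ b :: r))
        have hbP : b.1 ≤ n := by
          have := List.of_mem_filter (hf ▸ (mem_cons_self : b ∈ b :: r))
          simpa using this
        have hba : ple n b a = false := by
          have h1 : ple n a b = true := ha b hb
          rw [ple_iff] at h1
          rw [Bool.eq_false_iff]
          intro h2
          rw [ple_iff] at h2
          omega
        rw [List.cons_merge_cons, if_neg (by simp [hba]), ← hf, ih hL]

def Valid (u t : List ℕ) : Prop := Pairwise Rel (u.zip t)

def Nset (u : List ℕ) (e : ℕ →₀ ℕ) : Set (Fin u.length → ℕ) :=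
  {s : Fin u.length → ℕ |
    Monotone s ∧
    (∀ i : ℕ, ∀ hi : i + 1 < u.length, u.getD (i + 1) 0 < u.getD i 0 →
      s ⟨i, Nat.lt_of_succ_lt hi⟩ < s ⟨i + 1, hi⟩) ∧
    (∀ k : ℕ, e k = (Finset.univ.filter fun j => s j = k).card)}

def Mset (u : List ℕ) (e : ℕ →₀ ℕ) : Set (List ℕ) :=
  {t | t.length = u.length ∧ Valid u t ∧ ∀ k : ℕ, e k = t.count k}

lemma monotone_of_adj {l : ℕ} {f : Fin l → ℕ}
    (h : ∀ i (hi : i + 1 < l), f ⟨i, Nat.lt_of_succ_lt hi⟩ ≤ f ⟨i + 1, hi⟩) : Monotone f := by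
  have key : ∀ b (hb : b < l) a (ha : a ≤ b), f ⟨a, lt_of_le_of_lt (by omega) hb⟩ ≤ f ⟨b, hb⟩ := by
    intro b
    induction b with
    | zero => intro hb a ha; exact le_of_eq (congrArg f (Fin.mk_eq_mk.mpr (by omega)))
    | succ b ih =>
      intro hb a ha
      rcases Nat.eq_or_lt_of_le ha with h' | h'
      · subst h'; exact le_refl _
      · exact le_trans (ih (by omega) a (by omega)) (h b hb)
  rintro ⟨a, ha⟩ ⟨b, hb⟩ hab
  exact key b hb a (by exact hab)

lemma count_ofFn {l : ℕ} (s : Fin l → ℕ) (k : ℕ) :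
    (List.ofFn s).count k = (Finset.univ.filter fun j => s j = k).card := by
  classical
  rw [List.ofFn_eq_map, List.count_eq_countP, List.countP_map]
  rw [List.countP_eq_length_filter]
  have : (Finset.univ.filter fun j => s j = k) =
      ((List.finRange l).filter (((· == k) : ℕ → Bool) ∘ s)).toFinset := by
    ext j
    simp [List.mem_filter, List.mem_finRange]
  rw [this, List.toFinset_card_of_nodup]
  exact (List.Nodup.filter _ (List.nodup_finRange l))

lemma valid_ofFn_iff (u : List ℕ) (s : Fin u.length → ℕ) :
    (Monotone s ∧
      (∀ i : ℕ, ∀ hi : i + 1 < u.length, u.getD (i + 1) 0 < u.getD i 0 →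
        s ⟨i, Nat.lt_of_succ_lt hi⟩ < s ⟨i + 1, hi⟩))
    ↔ Valid u (List.ofFn s) := by
  have hlen : (u.zip (List.ofFn s)).length = u.length := by
    simp [List.length_zip]
  constructor
  · rintro ⟨hm, hs⟩
    rw [Valid, ← List.isChain_iff_pairwise, List.isChain_iff_getElem]
    intro i hi
    have hi' : i + 1 < u.length := by omega
    have hg : ∀ (j : ℕ) (hj : j < u.length),
        (u.zip (List.ofFn s))[j]'(by omega) = (u[j], s ⟨j, hj⟩) := by
      intro j hj
      simp [List.get_eq_getElem, List.getElem_zip, List.getElem_ofFn]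
    rw [hg i (by omega), hg (i+1) hi']
    constructor
    · exact hm (by simp [Fin.mk_le_mk])
    · intro hdes
      apply hs i hi'
      rwa [List.getD_eq_getElem u 0 hi', List.getD_eq_getElem u 0 (by omega)]
  · intro hv
    have hc := List.isChain_iff_pairwise.2 hv
    rw [List.isChain_iff_getElem] at hc
    have hadj : ∀ i (hi : i + 1 < u.length),
        Rel (u[i], s ⟨i, by omega⟩) (u[i+1]'hi, s ⟨i+1, hi⟩) := by
      intro i hi
      have := hc i (by omega)
      simpa [List.get_eq_getElem, List.getElem_zip, List.getElem_ofFn] using this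
    constructor
    · exact monotone_of_adj fun i hi => (hadj i hi).1
    · intro i hi hdes
      apply (hadj i hi).2
      rwa [List.getD_eq_getElem u 0 hi, List.getD_eq_getElem u 0 (by omega)] at hdes

lemma Mset_eq_image (u : List ℕ) (e : ℕ →₀ ℕ) :
    Mset u e = List.ofFn '' (Nset u e) := by
  ext t
  constructor
  · rintro ⟨hlen, hval, hcnt⟩
    refine ⟨fun j => t.get (Fin.cast hlen.symm j), ?_, ?_⟩
    · have hofn : List.ofFn (fun j => t.get (Fin.cast hlen.symm j)) = t := by
        apply List.ext_getElem
        · simp [hlen]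
        · intro i h1 h2; simp
      refine ⟨((valid_ofFn_iff u _).2 (by rwa [hofn])).1,
        ((valid_ofFn_iff u _).2 (by rwa [hofn])).2, ?_⟩
      intro k
      calc e k = t.count k := hcnt k
        _ = (List.ofFn fun j => t.get (Fin.cast hlen.symm j)).count k := by rw [hofn]
        _ = _ := count_ofFn _ k
    · apply List.ext_getElem
      · simp [hlen]
      · intro i h1 h2; simp
  · rintro ⟨s, ⟨hm, hs, hcnt⟩, rfl⟩
    refine ⟨by simp, (valid_ofFn_iff u s).1 ⟨hm, hs⟩, ?_⟩
    intro k; rw [count_ofFn]; exact hcnt k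

lemma ncard_Mset (u : List ℕ) (e : ℕ →₀ ℕ) : (Mset u e).ncard = (Nset u e).ncard := by
  rw [Mset_eq_image, Set.ncard_image_of_injective _ List.ofFn_injective]

lemma Nset_finite (u : List ℕ) (e : ℕ →₀ ℕ) : (Nset u e).Finite := by
  apply Set.Finite.subset (Set.Finite.pi (fun _ : Fin u.length => e.support.finite_toSet))
  rintro s ⟨-, -, hcnt⟩
  rw [Set.mem_univ_pi]
  intro j
  simp only [Finset.coe_sort_coe, Finset.mem_coe, Finsupp.mem_support_iff]
  intro h0
  have := hcnt (s j)
  rw [h0] at this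
  have : (Finset.univ.filter fun j' => s j' = s j).card = 0 := this.symm
  rw [Finset.card_eq_zero, Finset.filter_eq_empty_iff] at this
  exact this (Finset.mem_univ j) rfl

lemma Mset_finite (u : List ℕ) (e : ℕ →₀ ℕ) : (Mset u e).Finite := by
  rw [Mset_eq_image]; exact (Nset_finite u e).image _



lemma ncard_sum_fibers {ι α : Type*} [DecidableEq ι] (F : Finset ι) (g : ι → Set α)
    (π : α → ι) (T : Set α)
    (hfin : ∀ i ∈ F, (g i).Finite)
    (hmem : ∀ a, a ∈ T ↔ π a ∈ F ∧ a ∈ g (π a))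
    (hfib : ∀ i ∈ F, ∀ a ∈ g i, π a = i) :
    ∑ i ∈ F, (g i).ncard = T.ncard := by
  classical
  have hT : T.Finite := by
    apply Set.Finite.subset (Set.Finite.biUnion F.finite_toSet hfin)
    intro a ha
    rw [hmem] at ha
    exact Set.mem_biUnion ha.1 ha.2
  rw [← hT.coe_toFinset, Set.ncard_coe_finset]
  rw [Finset.card_eq_sum_card_fiberwise (f := π) (t := F)
    (fun a ha => ((hmem a).1 (hT.mem_toFinset.1 ha)).1)]
  apply Finset.sum_congr rfl
  intro i hi
  have : g i = ↑(hT.toFinset.filter (fun a => π a = i)) := by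
    ext a
    simp only [Finset.coe_filter, Set.mem_setOf_eq, Set.Finite.mem_toFinset]
    constructor
    · intro hgi
      have hpa := hfib i hi a hgi
      exact ⟨(hmem a).2 ⟨hpa ▸ hi, hpa ▸ hgi⟩, hpa⟩
    · rintro ⟨haT, rfl⟩
      exact ((hmem a).1 haT).2
  rw [this, Set.ncard_coe_finset]

lemma ncard_prod {α β : Type*} (s : Set α) (t : Set β) :
    (s ×ˢ t).ncard = s.ncard * t.ncard := by
  rw [← Nat.card_coe_set_eq, ← Nat.card_coe_set_eq, ← Nat.card_coe_set_eq,
    ← Nat.card_prod]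
  exact Nat.card_congr (Equiv.Set.prod s t)



def P (n : ℕ) : ℕ × ℕ → Bool := fun p => decide (p.1 ≤ n)

def Phi (n : ℕ) (w' v : List ℕ) (x : List ℕ × List ℕ) : List ℕ × List ℕ :=
  (((w'.zip x.1).merge (v.zip x.2) (ple n)).map Prod.fst,
   ((w'.zip x.1).merge (v.zip x.2) (ple n)).map Prod.snd)

def Psi (n : ℕ) (y : List ℕ × List ℕ) : List ℕ × List ℕ :=
  (((y.1.zip y.2).filter (P n)).map Prod.snd,
   ((y.1.zip y.2).filter fun p => !P n p).map Prod.snd)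

def Aset (w' v : List ℕ) (d : ℕ →₀ ℕ) : Set (List ℕ × List ℕ) :=
  {x | x.1.length = w'.length ∧ x.2.length = v.length ∧ Valid w' x.1 ∧ Valid v x.2 ∧
    ∀ k : ℕ, d k = x.1.count k + x.2.count k}

def Bset (w' v : List ℕ) (d : ℕ →₀ ℕ) : Set (List ℕ × List ℕ) :=
  {x | IsShuffle w' v x.1 ∧ x.2.length = x.1.length ∧ Valid x.1 x.2 ∧
    ∀ k : ℕ, d k = x.2.count k}

lemma pairwise_ple_of_valid {n : ℕ} {L : List (ℕ × ℕ)} (h : Pairwise Rel L) :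
    Pairwise (fun p q => ple n p q = true) L :=
  h.imp (fun hR => hR.ple)

section Bij

variable {n : ℕ} {w' v : List ℕ} {d : ℕ →₀ ℕ}

lemma phi_mapsTo (hw : ∀ a ∈ w', a ≤ n) (hv : ∀ a ∈ v, n < a) : ∀ x ∈ Aset w' v d, Phi n w' v x ∈ Bset w' v d := by
  rintro ⟨t', t''⟩ ⟨hl1, hl2, hv1, hv2, hc⟩
  set L₁ := w'.zip t' with hL₁
  set L₂ := v.zip t'' with hL₂
  set M := L₁.merge L₂ (ple n) with hM
  have h1f : L₁.map Prod.fst = w' := List.map_fst_zip (le_of_eq hl1.symm)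
  have h1s : L₁.map Prod.snd = t' := List.map_snd_zip (le_of_eq hl1)
  have h2f : L₂.map Prod.fst = v := List.map_fst_zip (le_of_eq hl2.symm)
  have h2s : L₂.map Prod.snd = t'' := List.map_snd_zip (le_of_eq hl2)
  have hI : Interleave L₁ L₂ M := interleave_merge _ _ _
  have hzip : M = (M.map Prod.fst).zip (M.map Prod.snd) := List.zip_of_prod rfl rfl
  have hm1 : ∀ p ∈ L₁, p.1 ≤ n := by
    rintro ⟨a, b⟩ hp; exact hw a (List.of_mem_zip hp).1
  have hm2 : ∀ p ∈ L₂, n < p.1 := by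
    rintro ⟨a, b⟩ hp; exact hv a (List.of_mem_zip hp).1
  have hSort : Pairwise (fun p q => ple n p q = true) M :=
    List.pairwise_merge (ple_trans n) (ple_total n) L₁ L₂
      (pairwise_ple_of_valid hv1) (pairwise_ple_of_valid hv2)
  refine ⟨?_, ?_, ?_, ?_⟩
  · have := hI.map Prod.fst
    rw [h1f, h2f] at this
    exact this.isShuffle
  · simp [Phi]
  · show Pairwise Rel (((M.map Prod.fst)).zip ((M.map Prod.snd)))
    rw [← hzip]
    refine hI.pairwiseR hv1 hv2 hSort ?_ ?_
    · intro a b ha hb hab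
      have h1 := hm1 a ha
      have h2 := hm2 b hb
      rw [ple_iff] at hab
      exact ⟨by omega, fun hd => by omega⟩
    · intro a b ha hb hab
      have h1 := hm2 a ha
      have h2 := hm1 b hb
      rw [ple_iff] at hab
      exact ⟨by omega, fun hd => by omega⟩
  · intro k
    have hp : (M.map Prod.snd).Perm (t' ++ t'') := by
      have := (List.merge_perm_append (ple n) (xs := L₁) (ys := L₂)).map Prod.snd
      rwa [List.map_append, h1s, h2s] at this
    show d k = ((M.map Prod.snd)).count k
    rw [hp.count_eq, List.count_append]
    exact hc k

lemma psi_phi (hw : ∀ a ∈ w', a ≤ n) (hv : ∀ a ∈ v, n < a) : ∀ x ∈ Aset w' v d, Psi n (Phi n w' v x) = x := by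
  rintro ⟨t', t''⟩ ⟨hl1, hl2, hv1, hv2, hc⟩
  set L₁ := w'.zip t' with hL₁
  set L₂ := v.zip t'' with hL₂
  set M := L₁.merge L₂ (ple n) with hM
  have h1s : L₁.map Prod.snd = t' := List.map_snd_zip (le_of_eq hl1)
  have h2s : L₂.map Prod.snd = t'' := List.map_snd_zip (le_of_eq hl2)
  have hI : Interleave L₁ L₂ M := interleave_merge _ _ _
  have hzip : M = (M.map Prod.fst).zip (M.map Prod.snd) := List.zip_of_prod rfl rfl
  have hm1 : ∀ p ∈ L₁, P n p = true := by
    rintro ⟨a, b⟩ hp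
    simpa [P] using hw a (List.of_mem_zip hp).1
  have hm2 : ∀ p ∈ L₂, P n p = false := by
    rintro ⟨a, b⟩ hp
    have := hv a (List.of_mem_zip hp).1
    simp [P]; omega
  have hfil := hI.filter_eq hm1 hm2
  show (((((M.map Prod.fst)).zip ((M.map Prod.snd))).filter (P n)).map Prod.snd,
    ((((M.map Prod.fst)).zip ((M.map Prod.snd))).filter fun p => !P n p).map Prod.snd) = (t', t'')
  rw [← hzip, hfil.1, hfil.2, h1s, h2s]

lemma psi_mem_and_phi_psi (hw : ∀ a ∈ w', a ≤ n) (hv : ∀ a ∈ v, n < a) :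
    ∀ y ∈ Bset w' v d,
    Psi n y ∈ Aset w' v d ∧ Phi n w' v (Psi n y) = y := by
  rintro ⟨w, t⟩ ⟨hsh, hlen, hval, hcnt⟩
  set L := w.zip t with hL
  have hfst : L.map Prod.fst = w := List.map_fst_zip (le_of_eq hlen.symm)
  have hsnd : L.map Prod.snd = t := List.map_snd_zip (le_of_eq hlen)
  have hI : Interleave w' v w := isShuffle_interleave hsh
  have hwf := hI.filter_eq (P := fun a => decide (a ≤ n))
    (fun a ha => by simpa using hw a ha)
    (fun a ha => by have := hv a ha; simp only [decide_eq_false_iff_not]; omega)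
  have e1 : (L.filter (P n)).map Prod.fst = w' := by
    have h := List.filter_map (p := fun a => decide (a ≤ n)) (f := Prod.fst) (l := L)
    rw [hfst] at h
    have : ((fun a => decide (a ≤ n)) ∘ Prod.fst) = P n := rfl
    rw [this] at h
    rw [← h, hwf.1]
  have e2 : (L.filter fun p => !P n p).map Prod.fst = v := by
    have h := List.filter_map (p := fun a => !decide (a ≤ n)) (f := Prod.fst) (l := L)
    rw [hfst] at h
    have : ((fun a => !decide (a ≤ n)) ∘ Prod.fst) = fun p => !P n p := rfl
    rw [this] at h
    rw [← h, hwf.2]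
  set t1 := (L.filter (P n)).map Prod.snd with ht1
  set t2 := ((L.filter fun p => !P n p)).map Prod.snd with ht2
  have hz1 : L.filter (P n) = w'.zip t1 := List.zip_of_prod e1 rfl
  have hz2 : (L.filter fun p => !P n p) = v.zip t2 := List.zip_of_prod e2 rfl
  have hperm : (t1 ++ t2).Perm t := by
    have := (List.filter_append_perm (P n) L).map Prod.snd
    rwa [List.map_append, hsnd] at this
  have hmerge : (w'.zip t1).merge (v.zip t2) (ple n) = L := by
    rw [← hz1, ← hz2]
    exact merge_split n L (pairwise_ple_of_valid hval)
  constructor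
  · show (t1, t2) ∈ Aset w' v d
    refine ⟨?_, ?_, ?_, ?_, ?_⟩
    · show t1.length = w'.length
      rw [ht1, List.length_map, ← e1, List.length_map]
    · show t2.length = v.length
      rw [ht2, List.length_map, ← e2, List.length_map]
    · show Pairwise Rel (w'.zip t1)
      rw [← hz1]; exact hval.filter _
    · show Pairwise Rel (v.zip t2)
      rw [← hz2]; exact hval.filter _
    · intro k
      have h := hcnt k
      rw [← hperm.count_eq, List.count_append] at h
      exact h
  · show (((w'.zip t1).merge (v.zip t2) (ple n)).map Prod.fst,
      ((w'.zip t1).merge (v.zip t2) (ple n)).map Prod.snd) = (w, t)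
    rw [hmerge, hfst, hsnd]

lemma stepIII (hw : ∀ a ∈ w', a ≤ n) (hv : ∀ a ∈ v, n < a) (d : ℕ →₀ ℕ) : (Aset w' v d).ncard = (Bset w' v d).ncard := by
  have hbij : Set.BijOn (Phi n w' v) (Aset w' v d) (Bset w' v d) := by
    refine ⟨phi_mapsTo hw hv, ?_, ?_⟩
    · intro x hx y hy hxy
      rw [← psi_phi hw hv x hx, hxy, psi_phi hw hv y hy]
    · intro y hy
      obtain ⟨hmem, heq⟩ := psi_mem_and_phi_psi hw hv y hy
      exact ⟨Psi n y, hmem, heq⟩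
  rw [← hbij.image_eq, Set.ncard_image_of_injOn hbij.injOn]

end Bij

noncomputable def prof (t : List ℕ) : ℕ →₀ ℕ := Multiset.toFinsupp (↑t : Multiset ℕ)

lemma prof_apply (t : List ℕ) (k : ℕ) : prof t k = t.count k := by
  simp [prof]

lemma stepII (w' v : List ℕ) (d : ℕ →₀ ℕ) :
    ∑ pq ∈ Finset.HasAntidiagonal.antidiagonal d, (Mset w' pq.1).ncard * (Mset v pq.2).ncard
      = (Aset w' v d).ncard := by
  classical
  have key := ncard_sum_fibers (F := Finset.HasAntidiagonal.antidiagonal d)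
    (g := fun pq => (Mset w' pq.1) ×ˢ (Mset v pq.2))
    (π := fun x : List ℕ × List ℕ => (prof x.1, prof x.2)) (T := Aset w' v d)
    (fun pq _ => (Mset_finite _ _).prod (Mset_finite _ _))
    (fun x => by
      constructor
      · rintro ⟨l1, l2, v1, v2, hc⟩
        refine ⟨Finset.HasAntidiagonal.mem_antidiagonal.2 (Finsupp.ext fun k => ?_),
          ⟨⟨l1, v1, fun k => prof_apply _ _⟩, ⟨l2, v2, fun k => prof_apply _ _⟩⟩⟩
        rw [Finsupp.add_apply, prof_apply, prof_apply]
        exact (hc k).symm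
      · rintro ⟨hd, ⟨⟨l1, v1, c1⟩, ⟨l2, v2, c2⟩⟩⟩
        refine ⟨l1, l2, v1, v2, fun k => ?_⟩
        have h := DFunLike.congr_fun (Finset.HasAntidiagonal.mem_antidiagonal.1 hd) k
        rw [Finsupp.add_apply, prof_apply, prof_apply] at h
        exact h.symm)
    (fun pq _ x hx => by
      obtain ⟨⟨l1, v1, c1⟩, ⟨l2, v2, c2⟩⟩ := hx
      have e1 : prof x.1 = pq.1 := Finsupp.ext fun k => by rw [prof_apply]; exact (c1 k).symm
      have e2 : prof x.2 = pq.2 := Finsupp.ext fun k => by rw [prof_apply]; exact (c2 k).symm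
      show (prof x.1, prof x.2) = pq
      rw [e1, e2])
  rw [← key]
  exact Finset.sum_congr rfl fun pq _ => (ncard_prod _ _).symm

lemma stepIV (w' v : List ℕ) (d : ℕ →₀ ℕ) (F : Finset (List ℕ))
    (hF : ∀ w, w ∈ F ↔ IsShuffle w' v w) :
    ∑ w ∈ F, (Mset w d).ncard = (Bset w' v d).ncard := by
  classical
  have hg : ∀ w : List ℕ, {x : List ℕ × List ℕ | x.1 = w ∧ x.2 ∈ Mset w d}
      = (fun t => (w, t)) '' (Mset w d) := by
    intro w
    ext ⟨a, b⟩
    simp only [Set.mem_setOf_eq, Set.mem_image]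
    constructor
    · rintro ⟨rfl, hb⟩; exact ⟨b, hb, rfl⟩
    · rintro ⟨t, ht, heq⟩
      cases heq
      exact ⟨rfl, ht⟩
  have key := ncard_sum_fibers (F := F)
    (g := fun w => {x : List ℕ × List ℕ | x.1 = w ∧ x.2 ∈ Mset w d})
    (π := Prod.fst) (T := Bset w' v d)
    (fun w _ => by
      show ({x : List ℕ × List ℕ | x.1 = w ∧ x.2 ∈ Mset w d}).Finite
      rw [hg w]; exact (Mset_finite w d).image _)
    (fun x => by
      constructor
      · rintro ⟨hsh, hlen, hval, hcnt⟩
        exact ⟨(hF _).2 hsh, rfl, hlen, hval, hcnt⟩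
      · rintro ⟨hx1, -, hlen, hval, hcnt⟩
        exact ⟨(hF _).1 hx1, hlen, hval, hcnt⟩)
    (fun w _ x hx => hx.1)
  rw [← key]
  apply Finset.sum_congr rfl
  intro w _
  show (Mset w d).ncard = ({x : List ℕ × List ℕ | x.1 = w ∧ x.2 ∈ Mset w d}).ncard
  rw [hg w, Set.ncard_image_of_injective _
    (fun a b h => by simpa using congrArg Prod.snd h)]



end FSP

/-- `L_{C(w')} · L_{C(w'')} = Σ_{w ∈ Sh(w', w''[n])} L_{C(w)}`, where `w'` is a word
on the alphabet `[n]`, `w''` a word on positive integers, and `w''[n]` is `w''` with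
all letters increased by `n`. -/
theorem fundamental_shuffle_product (n : ℕ) (w' w'' : List ℕ)
    (h1 : ∀ x ∈ w', 1 ≤ x ∧ x ≤ n) (h2 : ∀ x ∈ w'', 1 ≤ x) :
    Lw w' * Lw (w''.map (· + n)) =
      ∑ᶠ w ∈ {w : List ℕ | IsShuffle w' (w''.map (· + n)) w}, Lw w := by
  classical
  set v := w''.map (· + n) with hvdef
  have hw : ∀ a ∈ w', a ≤ n := fun a ha => (h1 a ha).2
  have hv : ∀ a ∈ v, n < a := by
    intro a ha
    rw [hvdef, List.mem_map] at ha
    obtain ⟨y, hy, rfl⟩ := ha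
    have := h2 y hy
    omega
  have hfin : {w : List ℕ | IsShuffle w' v w}.Finite := by
    apply Set.Finite.subset (w' ++ v).permutations.finite_toSet
    intro w hmem
    simpa [List.mem_permutations] using (FSP.isShuffle_interleave hmem).perm
  rw [← hfin.coe_toFinset, finsum_mem_coe_finset]
  apply MvPowerSeries.ext
  intro d
  rw [MvPowerSeries.coeff_mul, map_sum]
  have hL : ∀ (u : List ℕ) (e : ℕ →₀ ℕ),
      (MvPowerSeries.coeff e) (Lw u) = ((FSP.Nset u e).ncard : ℚ) := fun u e => rfl
  have key : ∑ pq ∈ Finset.HasAntidiagonal.antidiagonal d,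
        (FSP.Nset w' pq.1).ncard * (FSP.Nset v pq.2).ncard
      = ∑ w ∈ hfin.toFinset, (FSP.Nset w d).ncard := by
    calc ∑ pq ∈ Finset.HasAntidiagonal.antidiagonal d,
          (FSP.Nset w' pq.1).ncard * (FSP.Nset v pq.2).ncard
        = ∑ pq ∈ Finset.HasAntidiagonal.antidiagonal d,
            (FSP.Mset w' pq.1).ncard * (FSP.Mset v pq.2).ncard := by
          refine Finset.sum_congr rfl fun pq _ => ?_
          rw [FSP.ncard_Mset, FSP.ncard_Mset]
      _ = (FSP.Aset w' v d).ncard := FSP.stepII w' v d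
      _ = (FSP.Bset w' v d).ncard := FSP.stepIII hw hv d
      _ = ∑ w ∈ hfin.toFinset, (FSP.Mset w d).ncard :=
          (FSP.stepIV w' v d _ (fun w => hfin.mem_toFinset)).symm
      _ = _ := Finset.sum_congr rfl fun w _ => FSP.ncard_Mset w d
  simp only [hL]
  exact_mod_cast key
end

section
/- The coproduct of a fundamental quasisymmetric function satisfies Δ(L_{C(w)}) = Σ L_β ⊗ L_γ, where the sum is over all pairs of compositions β = (β_1,...,β_k), γ = (γ_1,...,γ_n) such that either (β_1,...,β_k,γ_1,...,γ_n) = C(w) or (β_1,...,β_{k-1}, β_k + γ_1, γ_2,...,γ_n) = C(w). -/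
/-- The descent composition of a word: lengths of its maximal weakly increasing runs. -/
def descComp : List ℕ → List ℕ
  | [] => []
  | [_] => [1]
  | a :: b :: t =>
    if b < a then 1 :: descComp (b :: t)
    else
      match descComp (b :: t) with
      | [] => [1]
      | c :: cs => (c + 1) :: cs

/-- All (nonempty) partial sums of a composition; the set `S_α` consists of those
partial sums that are less than the total sum. -/
def psums : List ℕ → List ℕ
  | [] => []
  | a :: t => a :: (psums t).map (· + a)

/-- The fundamental quasisymmetric function `L_α` indexed by a composition `α`,
over an ordered alphabet `σ`, with values of the summation indices restricted to
lie in the set `A`:  the sum of `x_{i_1} ⋯ x_{i_l}` (`l = sum α`) over weakly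
increasing sequences in `A` which increase strictly at the positions of `S_α`.
Given coefficientwise. -/
noncomputable def Lc (σ : Type) [LinearOrder σ] (A : Set σ) (α : List ℕ) :
    MvPowerSeries σ ℚ :=
  fun d => (Set.ncard {s : Fin α.sum → σ |
    (∀ j, s j ∈ A) ∧ Monotone s ∧
    (∀ i : ℕ, ∀ hi : i + 1 < α.sum, (i + 1) ∈ psums α →
      s ⟨i, Nat.lt_of_succ_lt hi⟩ < s ⟨i + 1, hi⟩) ∧
    (∀ k : σ, d k = (Finset.univ.filter fun j => s j = k).card)} : ℚ)

/-- Cut a composition at position `k`. -/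
def cutC : List ℕ → ℕ → List ℕ × List ℕ
  | [], _ => ([], [])
  | a :: t, k =>
    if k = 0 then ([], a :: t)
    else if k < a then ([k], (a - k) :: t)
    else (a :: (cutC t (k - a)).1, (cutC t (k - a)).2)

lemma cutC_sum_fst : ∀ (α : List ℕ) (k : ℕ), k ≤ α.sum → ((cutC α k).1).sum = k
  | [], k, h => by simp at h; simp [cutC, h]
  | a :: t, k, h => by
    by_cases h0 : k = 0
    · simp [cutC, h0]
    · by_cases h1 : k < a
      · simp [cutC, h0, h1]
      · have : k - a ≤ t.sum := by simp at h; omega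
        simp [cutC, h0, h1, cutC_sum_fst t (k - a) this]
        omega

lemma cutC_sum_snd : ∀ (α : List ℕ) (k : ℕ), k ≤ α.sum → ((cutC α k).2).sum = α.sum - k
  | [], k, h => by simp at h; simp [cutC, h]
  | a :: t, k, h => by
    by_cases h0 : k = 0
    · simp [cutC, h0]
    · by_cases h1 : k < a
      · simp [cutC, h0, h1]; omega
      · have : k - a ≤ t.sum := by simp at h; omega
        simp [cutC, h0, h1, cutC_sum_snd t (k - a) this]
        omega

lemma cutC_pos_fst : ∀ (α : List ℕ), (∀ a ∈ α, 0 < a) → ∀ (k : ℕ),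
    ∀ x ∈ (cutC α k).1, 0 < x
  | [], _, k => by simp [cutC]
  | a :: t, hpos, k => by
    by_cases h0 : k = 0
    · simp [cutC, h0]
    · by_cases h1 : k < a
      · simp [cutC, h0, h1]; omega
      · simp only [cutC, if_neg h0, if_neg h1]
        intro x hx
        rcases List.mem_cons.mp hx with rfl | hx
        · exact hpos x (by simp)
        · exact cutC_pos_fst t (fun b hb => hpos b (by simp [hb])) (k - a) x hx

lemma cutC_pos_snd : ∀ (α : List ℕ), (∀ a ∈ α, 0 < a) → ∀ (k : ℕ),
    ∀ x ∈ (cutC α k).2, 0 < x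
  | [], _, k => by simp [cutC]
  | a :: t, hpos, k => by
    by_cases h0 : k = 0
    · simpa [cutC, h0] using hpos
    · by_cases h1 : k < a
      · simp only [cutC, if_neg h0, if_pos h1]
        intro x hx
        rcases List.mem_cons.mp hx with rfl | hx
        · omega
        · exact hpos x (by simp [hx])
      · simp only [cutC, if_neg h0, if_neg h1]
        exact cutC_pos_snd t (fun b hb => hpos b (by simp [hb])) (k - a)

/-- The cut pair satisfies the concat-or-merge condition. -/
lemma cutC_concat_or_merge : ∀ (α : List ℕ) (k : ℕ), k ≤ α.sum →
    ((cutC α k).1 ++ (cutC α k).2 = α ∨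
      ∃ (b : List ℕ) (x y : ℕ) (g : List ℕ),
        (cutC α k).1 = b ++ [x] ∧ (cutC α k).2 = y :: g ∧ b ++ (x + y) :: g = α)
  | [], k, h => by simp at h; simp [cutC, h]
  | a :: t, k, h => by
    by_cases h0 : k = 0
    · simp [cutC, h0]
    · by_cases h1 : k < a
      · right
        refine ⟨[], k, a - k, t, by simp [cutC, h0, h1], by simp [cutC, h0, h1], by simp; omega⟩
      · have ht : k - a ≤ t.sum := by simp at h; omega
        rcases cutC_concat_or_merge t (k - a) ht with hc | ⟨b, x, y, g, e1, e2, e3⟩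
        · left; simp [cutC, h0, h1, hc]
        · right
          exact ⟨a :: b, x, y, g, by simp [cutC, h0, h1, e1], by simp [cutC, h0, h1, e2],
            by simp [e3]⟩

lemma cutC_concat_eq : ∀ (b g : List ℕ), (∀ x ∈ b, 0 < x) → cutC (b ++ g) b.sum = (b, g)
  | [], g, _ => by cases g <;> simp [cutC]
  | a :: b', g, hpos => by
    have ha : 0 < a := hpos a (by simp)
    by_cases hb' : b'.sum = 0
    · have : b' = [] := by
        rcases List.eq_nil_or_concat b' with rfl | ⟨l, x, rfl⟩
        · rfl
        · exfalso
          have := hpos x (by simp)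
          simp at hb'
          omega
      subst this
      simp only [List.sum_cons, List.sum_nil]
      cases g with
      | nil => simp [cutC]; omega
      | cons c g' => simp [cutC]; omega
    · have h0 : ¬ (a + b'.sum = 0) := by omega
      have h1 : ¬ (a + b'.sum < a) := by omega
      have := cutC_concat_eq b' g (fun x hx => hpos x (by simp [hx]))
      simp only [cutC, List.cons_append, List.sum_cons, if_neg h0, if_neg h1, List.append_eq]
      rw [show a + b'.sum - a = b'.sum by omega, this]

lemma cutC_merge_eq : ∀ (b : List ℕ) (x y : ℕ) (g : List ℕ), 0 < x → 0 < y →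
    cutC (b ++ (x + y) :: g) (b.sum + x) = (b ++ [x], y :: g)
  | [], x, y, g, hx, hy => by
    have h0 : ¬ (x = 0) := by omega
    have h1 : x < x + y := by omega
    simp [cutC, h0, h1]
  | a :: b', x, y, g, hx, hy => by
    have h0 : ¬ (a + b'.sum + x = 0) := by omega
    have h1 : ¬ (a + b'.sum + x < a) := by omega
    have := cutC_merge_eq b' x y g hx hy
    simp only [List.cons_append, cutC, List.sum_cons, if_neg h0, if_neg h1, List.append_eq]
    rw [show a + b'.sum + x - a = b'.sum + x by omega, this]


lemma mem_psums_cons {m a : ℕ} {t : List ℕ} :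
    m ∈ psums (a :: t) ↔ m = a ∨ ∃ q ∈ psums t, q + a = m := by
  simp [psums]

lemma psums_pos : ∀ (α : List ℕ), (∀ a ∈ α, 0 < a) → ∀ m ∈ psums α, 0 < m
  | [], _ => by simp [psums]
  | a :: t, hpos => by
    intro m hm
    rcases mem_psums_cons.mp hm with he | ⟨q, _, he⟩ <;>
      have := hpos a (by simp) <;> omega

lemma psums_cut_left : ∀ (α : List ℕ), (∀ a ∈ α, 0 < a) → ∀ (k : ℕ), k ≤ α.sum →
    ∀ m, 0 < m → m < k → (m ∈ psums (cutC α k).1 ↔ m ∈ psums α)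
  | [], _, k, h => by simp at h; simp [h]
  | a :: t, hpos, k, h => by
    intro m hm hmk
    have hpt : ∀ a ∈ t, 0 < a := fun b hb => hpos b (by simp [hb])
    by_cases h0 : k = 0
    · omega
    · by_cases h1 : k < a
      · have hL : m ∈ psums (cutC (a :: t) k).1 ↔ m = k := by
          simp [cutC, if_neg h0, if_pos h1, psums]
        rw [hL, mem_psums_cons]
        constructor
        · intro he; omega
        · rintro (rfl | ⟨q, hq, rfl⟩) <;> omega
      · simp only [cutC, if_neg h0, if_neg h1]
        have ht : k - a ≤ t.sum := by simp at h; omega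
        rw [mem_psums_cons, mem_psums_cons]
        constructor
        · rintro (rfl | ⟨q, hq, rfl⟩)
          · left; rfl
          · have hq0 : 0 < q := psums_pos _ (cutC_pos_fst t hpt (k - a)) q hq
            right
            exact ⟨q, (psums_cut_left t hpt (k - a) ht q hq0 (by omega)).mp hq, rfl⟩
        · rintro (rfl | ⟨q, hq, rfl⟩)
          · left; rfl
          · have hq0 : 0 < q := psums_pos t hpt q hq
            right
            exact ⟨q, (psums_cut_left t hpt (k - a) ht q hq0 (by omega)).mpr hq, rfl⟩

lemma psums_cut_right : ∀ (α : List ℕ) (k : ℕ), k ≤ α.sum → ∀ m, 0 < m →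
    (m ∈ psums (cutC α k).2 ↔ m + k ∈ psums α)
  | [], k, h => by simp at h; simp [h, cutC, psums]
  | a :: t, k, h => by
    intro m hm
    by_cases h0 : k = 0
    · simp [cutC, h0]
    · by_cases h1 : k < a
      · simp only [cutC, if_neg h0, if_pos h1]
        rw [mem_psums_cons, mem_psums_cons]
        constructor
        · rintro (rfl | ⟨q, hq, rfl⟩)
          · left; omega
          · right; exact ⟨q, hq, by omega⟩
        · rintro (he | ⟨q, hq, he⟩)
          · left; omega
          · right; exact ⟨q, hq, by omega⟩
      · simp only [cutC, if_neg h0, if_neg h1]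
        have ht : k - a ≤ t.sum := by simp at h; omega
        rw [psums_cut_right t (k - a) ht m hm, mem_psums_cons]
        constructor
        · intro hq
          right
          exact ⟨m + (k - a), hq, by omega⟩
        · rintro (he | ⟨q, hq, he⟩)
          · omega
          · have : q = m + (k - a) := by omega
            subst this; exact hq

lemma descComp_pos : ∀ (w : List ℕ), ∀ a ∈ descComp w, 0 < a
  | [] => by simp [descComp]
  | [x] => by simp [descComp]
  | a :: b :: t => by
    intro c hc
    by_cases h : b < a
    · rw [descComp, if_pos h] at hc
      rcases List.mem_cons.mp hc with rfl | hc
      · omega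
      · exact descComp_pos (b :: t) c hc
    · rw [descComp, if_neg h] at hc
      rcases hdc : descComp (b :: t) with _ | ⟨c', cs⟩
      · rw [hdc] at hc; simp at hc; omega
      · rw [hdc] at hc
        rcases List.mem_cons.mp hc with rfl | hc
        · have := descComp_pos (b :: t) c' (by rw [hdc]; simp)
          omega
        · exact descComp_pos (b :: t) c (by rw [hdc]; simp [hc])


lemma mem_lower_iff {n : ℕ} (F : Finset (Fin n))
    (hlow : ∀ i j : Fin n, i ≤ j → j ∈ F → i ∈ F) (j : Fin n) :
    j ∈ F ↔ (j : ℕ) < F.card := by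
  constructor
  · intro hj
    have hsub : Finset.Iic j ⊆ F := fun i hi => hlow i j (Finset.mem_Iic.mp hi) hj
    have := Finset.card_le_card hsub
    rw [Fin.card_Iic] at this
    omega
  · intro hj
    by_contra hjF
    have hsub : F ⊆ Finset.Iio j := by
      intro i hi
      rw [Finset.mem_Iio]
      by_contra hij
      exact hjF (hlow j i (le_of_not_gt hij) hi)
    have := Finset.card_le_card hsub
    rw [Fin.card_Iio] at this
    omega

/-- equiv for the low piece -/
def lowEquiv {σ : Type} (n k : ℕ) (hk : k ≤ n) (P : σ → Prop) (s : Fin n → σ) :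
    {j : Fin n // P (s j) ∧ (j : ℕ) < k} ≃ {i : Fin k // P (s ⟨(i : ℕ), by omega⟩)} where
  toFun x := ⟨⟨(x.1 : ℕ), x.2.2⟩, x.2.1⟩
  invFun i := ⟨⟨(i.1 : ℕ), by omega⟩, i.2, i.1.2⟩
  left_inv x := rfl
  right_inv i := rfl

/-- equiv for the high piece -/
def highEquiv {σ : Type} (n k m : ℕ) (h : n = k + m) (P : σ → Prop) (s : Fin n → σ) :
    {j : Fin n // P (s j) ∧ ¬ (j : ℕ) < k} ≃ {i : Fin m // P (s ⟨k + (i : ℕ), by omega⟩)} where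
  toFun x := ⟨⟨(x.1 : ℕ) - k, by have := x.1.2; have := x.2.2; omega⟩, by
    have hx := x.2.1
    have he : (⟨k + ((x.1 : ℕ) - k), by have := x.1.2; have := x.2.2; omega⟩ : Fin n) = x.1 :=
      Fin.ext (by simp; have := x.2.2; omega)
    rw [he]
    exact hx⟩
  invFun i := ⟨⟨k + (i.1 : ℕ), by omega⟩, i.2, by simp⟩
  left_inv x := Subtype.ext (Fin.ext (by simp; have := x.2.2; omega))
  right_inv i := Subtype.ext (Fin.ext (by simp))

lemma count_split {σ : Type} [LinearOrder σ] {n k m : ℕ} (h : n = k + m) (hk : k ≤ n)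
    (s : Fin n → σ) (v : σ) :
    (Finset.univ.filter fun j : Fin n => s j = v).card
      = (Finset.univ.filter fun j : Fin k => s ⟨(j : ℕ), by omega⟩ = v).card
        + (Finset.univ.filter fun j : Fin m => s ⟨k + (j : ℕ), by omega⟩ = v).card := by
  have base : (Finset.univ.filter fun j : Fin n => s j = v).card
      = ((Finset.univ.filter fun j : Fin n => s j = v ∧ (j : ℕ) < k).card
        + (Finset.univ.filter fun j : Fin n => s j = v ∧ ¬ (j : ℕ) < k).card) := by
    rw [← Finset.filter_filter, ← Finset.filter_filter,
      Finset.card_filter_add_card_filter_not]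
  rw [base]
  congr 1
  · rw [← Fintype.card_subtype, ← Fintype.card_subtype]
    exact Fintype.card_congr (lowEquiv n k hk (· = v) s)
  · rw [← Fintype.card_subtype, ← Fintype.card_subtype]
    exact Fintype.card_congr (highEquiv n k m h (· = v) s)

lemma card_filter_pred {σ : Type} [LinearOrder σ] {n k m : ℕ} (h : n = k + m)
    (P : σ → Prop) [DecidablePred P] (s : Fin n → σ)
    (h1 : ∀ j : Fin k, P (s ⟨(j : ℕ), by omega⟩))
    (h2 : ∀ j : Fin m, ¬ P (s ⟨k + (j : ℕ), by omega⟩)) :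
    (Finset.univ.filter fun j : Fin n => P (s j)).card = k := by
  have base : (Finset.univ.filter fun j : Fin n => P (s j)).card
      = ((Finset.univ.filter fun j : Fin n => P (s j) ∧ (j : ℕ) < k).card
        + (Finset.univ.filter fun j : Fin n => P (s j) ∧ ¬ (j : ℕ) < k).card) := by
    rw [← Finset.filter_filter, ← Finset.filter_filter,
      Finset.card_filter_add_card_filter_not]
  rw [base]
  have e1 : (Finset.univ.filter fun j : Fin n => P (s j) ∧ (j : ℕ) < k).card
      = (Finset.univ.filter fun j : Fin k => P (s ⟨(j : ℕ), by omega⟩)).card := by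
    rw [← Fintype.card_subtype, ← Fintype.card_subtype]
    exact Fintype.card_congr (lowEquiv n k (by omega) P s)
  have e2 : (Finset.univ.filter fun j : Fin n => P (s j) ∧ ¬ (j : ℕ) < k).card
      = (Finset.univ.filter fun j : Fin m => P (s ⟨k + (j : ℕ), by omega⟩)).card := by
    rw [← Fintype.card_subtype, ← Fintype.card_subtype]
    exact Fintype.card_congr (highEquiv n k m h P s)
  rw [e1, e2]
  rw [Finset.filter_true_of_mem (fun j _ => h1 j), Finset.filter_false_of_mem (fun j _ => h2 j)]
  simp

lemma seq_finite {σ : Type} [LinearOrder σ] {n : ℕ} (d : σ →₀ ℕ) (S : Set (Fin n → σ))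
    (hS : ∀ s ∈ S, ∀ k : σ, d k = (Finset.univ.filter fun j => s j = k).card) :
    S.Finite := by
  apply Set.Finite.subset (Set.Finite.pi (fun _ : Fin n => d.support.finite_toSet))
  intro s hs j _
  have hd := hS s hs (s j)
  have hj : j ∈ Finset.univ.filter fun i => s i = s j := by simp
  have hcard : 0 < (Finset.univ.filter fun i => s i = s j).card :=
    Finset.card_pos.mpr ⟨j, hj⟩
  simp only [Finset.mem_coe, Finsupp.mem_support_iff]
  rw [hd]
  exact hcard.ne'

lemma ncard_fiberwise {A : Type} {S : Set A} (hS : S.Finite) (f : A → ℕ) (r : Finset ℕ)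
    (hf : ∀ s ∈ S, f s ∈ r) :
    S.ncard = ∑ k ∈ r, Set.ncard {x ∈ S | f x = k} := by
  classical
  rw [Set.ncard_eq_toFinset_card S hS]
  rw [Finset.card_eq_sum_card_fiberwise (f := f) (t := r)
    (fun x hx => hf x (hS.mem_toFinset.mp hx))]
  apply Finset.sum_congr rfl
  intro k _
  rw [← Set.ncard_coe_finset]
  congr 1
  ext x
  simp [hS.mem_toFinset]


abbrev Sig := Lex (ℕ ⊕ ℕ)

def LSet : Set Sig := {v | ∃ m : ℕ, v = toLex (Sum.inl m)}
def RSet : Set Sig := {v | ∃ m : ℕ, v = toLex (Sum.inr m)}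

noncomputable instance : DecidablePred (fun v : Sig => v ∈ LSet) := Classical.decPred _

lemma LR_total (v : Sig) : v ∈ LSet ∨ v ∈ RSet := by
  rcases h : ofLex v with m | m
  · left; exact ⟨m, by rw [← h]; rfl⟩
  · right; exact ⟨m, by rw [← h]; rfl⟩

lemma not_LR {v : Sig} (h1 : v ∈ LSet) (h2 : v ∈ RSet) : False := by
  obtain ⟨a, rfl⟩ := h1
  obtain ⟨b, hb⟩ := h2
  exact absurd (toLex.injective hb) (by simp)

lemma L_lt_R {v w : Sig} (h1 : v ∈ LSet) (h2 : w ∈ RSet) : v < w := by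
  obtain ⟨a, rfl⟩ := h1
  obtain ⟨b, rfl⟩ := h2
  exact Sum.Lex.inl_lt_inr a b

lemma R_le_mono {v w : Sig} (h1 : v ∈ RSet) (hle : v ≤ w) : w ∈ RSet := by
  rcases LR_total w with hw | hw
  · exact absurd (L_lt_R hw h1) (not_lt.mpr hle)
  · exact hw

lemma notL_iff {v : Sig} : ¬ v ∈ LSet ↔ v ∈ RSet :=
  ⟨fun h => (LR_total v).resolve_left h, fun h h' => not_LR h' h⟩

def SeqSet (σ : Type) [LinearOrder σ] (A : Set σ) (n : ℕ) (ps : List ℕ) (d : σ →₀ ℕ) :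
    Set (Fin n → σ) :=
  {s | (∀ j, s j ∈ A) ∧ Monotone s ∧
    (∀ i : ℕ, ∀ hi : i + 1 < n, (i + 1) ∈ ps →
      s ⟨i, Nat.lt_of_succ_lt hi⟩ < s ⟨i + 1, hi⟩) ∧
    (∀ k : σ, d k = (Finset.univ.filter fun j => s j = k).card)}

noncomputable def leftCount {n : ℕ} (s : Fin n → Sig) : ℕ :=
  (Finset.univ.filter fun j => s j ∈ LSet).card

lemma leftCount_le {n : ℕ} (s : Fin n → Sig) : leftCount s ≤ n := by
  have := Finset.card_filter_le (Finset.univ : Finset (Fin n)) (fun j => s j ∈ LSet)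
  simpa [leftCount] using this

lemma leftCount_iff {n : ℕ} {s : Fin n → Sig} (hm : Monotone s) (j : Fin n) :
    s j ∈ LSet ↔ (j : ℕ) < leftCount s := by
  have := mem_lower_iff (Finset.univ.filter fun j => s j ∈ LSet) ?_ j
  · simpa [leftCount] using this
  · intro i j hij hjF
    simp only [Finset.mem_filter, Finset.mem_univ, true_and] at hjF ⊢
    by_contra hi
    exact not_LR hjF (R_le_mono (notL_iff.mp hi) (hm hij))

def restr1 {σ : Type} (k : ℕ) {n : ℕ} (hk : k ≤ n) (s : Fin n → σ) : Fin k → σ :=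
  fun j => s ⟨(j : ℕ), by omega⟩

def restr2 {σ : Type} (k : ℕ) {n m : ℕ} (h : n = k + m) (s : Fin n → σ) : Fin m → σ :=
  fun j => s ⟨k + (j : ℕ), by omega⟩

def glue {σ : Type} {k m : ℕ} (s1 : Fin k → σ) (s2 : Fin m → σ) (n : ℕ) (h : n = k + m) :
    Fin n → σ :=
  fun j => if hj : (j : ℕ) < k then s1 ⟨(j : ℕ), hj⟩ else s2 ⟨(j : ℕ) - k, by omega⟩

lemma restr1_glue {σ : Type} {k m : ℕ} (s1 : Fin k → σ) (s2 : Fin m → σ) (n : ℕ) (h : n = k + m) :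
    restr1 k (by omega) (glue s1 s2 n h) = s1 := by
  funext j
  simp only [restr1, glue]
  rw [dif_pos j.2]

lemma restr2_glue {σ : Type} {k m : ℕ} (s1 : Fin k → σ) (s2 : Fin m → σ) (n : ℕ) (h : n = k + m) :
    restr2 k h (glue s1 s2 n h) = s2 := by
  funext j
  simp only [restr2, glue]
  rw [dif_neg (by omega)]
  exact congrArg s2 (Fin.ext (by simp))

lemma glue_restr {σ : Type} {k : ℕ} {n m : ℕ} (h : n = k + m) (s : Fin n → σ) :
    glue (restr1 k (by omega) s) (restr2 k h s) n h = s := by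
  funext j
  simp only [restr1, restr2, glue]
  by_cases hj : (j : ℕ) < k
  · rw [dif_pos hj]
  · rw [dif_neg hj]
    exact congrArg s (Fin.ext (by simp; omega))

lemma count_split' {σ : Type} [LinearOrder σ] {n k m : ℕ} (h : n = k + m) (s : Fin n → σ) (v : σ) :
    (Finset.univ.filter fun j : Fin n => s j = v).card
      = (Finset.univ.filter fun j => restr1 k (by omega) s j = v).card
        + (Finset.univ.filter fun j => restr2 k h s j = v).card :=
  count_split h (by omega) s v

lemma count_eq_zero {σ : Type} [LinearOrder σ] {n : ℕ} (s : Fin n → σ) (v : σ)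
    (hv : ∀ j, s j ≠ v) :
    (Finset.univ.filter fun j => s j = v).card = 0 := by
  rw [Finset.card_eq_zero, Finset.filter_eq_empty_iff]
  exact fun j _ => hv j


noncomputable def dInL (d : Sig →₀ ℕ) : Sig →₀ ℕ := d.filter (fun v => v ∈ LSet)
noncomputable def dInR (d : Sig →₀ ℕ) : Sig →₀ ℕ := d.filter (fun v => ¬ v ∈ LSet)

lemma dInL_add_dInR (d : Sig →₀ ℕ) : dInL d + dInR d = d :=
  Finsupp.filter_pos_add_filter_neg d _

lemma dInL_apply (d : Sig →₀ ℕ) (v : Sig) : dInL d v = if v ∈ LSet then d v else 0 :=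
  Finsupp.filter_apply _ d v

lemma dInR_apply (d : Sig →₀ ℕ) (v : Sig) : dInR d v = if v ∈ LSet then 0 else d v := by
  rw [dInR, Finsupp.filter_apply]
  by_cases hv : v ∈ LSet <;> simp [hv]

lemma restr_mem (β γ : List ℕ) (n : ℕ) (h : n = β.sum + γ.sum) (ps : List ℕ)
    (d : Sig →₀ ℕ)
    (hyp1 : ∀ m, 0 < m → m < β.sum → ((m ∈ psums β) ↔ m ∈ ps))
    (hyp2 : ∀ m, 0 < m → ((m ∈ psums γ) ↔ (m + β.sum) ∈ ps))
    (s : Fin n → Sig)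
    (hs : s ∈ SeqSet Sig Set.univ n ps d) (hc : leftCount s = β.sum) :
    restr1 β.sum (by omega) s ∈ SeqSet Sig LSet β.sum (psums β) (dInL d) ∧
    restr2 β.sum h s ∈ SeqSet Sig RSet γ.sum (psums γ) (dInR d) := by
  obtain ⟨-, hmono, hstrict, hcount⟩ := hs
  have hLpos : ∀ j : Fin β.sum, s ⟨(j : ℕ), by omega⟩ ∈ LSet := by
    intro j
    exact (leftCount_iff hmono _).mpr (lt_of_lt_of_le j.2 (le_of_eq hc.symm))
  have hRpos : ∀ j : Fin γ.sum, s ⟨β.sum + (j : ℕ), by omega⟩ ∈ RSet := by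
    intro j
    refine notL_iff.mp (fun hL => absurd ((leftCount_iff hmono _).mp hL)
      (Nat.not_lt.mpr (hc.le.trans (Nat.le_add_right _ _))))
  refine ⟨⟨fun j => hLpos j, ?_, ?_, ?_⟩, fun j => hRpos j, ?_, ?_, ?_⟩
  · intro a b hab
    exact hmono (show (⟨(a : ℕ), by omega⟩ : Fin n) ≤ ⟨(b : ℕ), by omega⟩ from hab)
  · intro i hi hmem
    exact hstrict i (by omega) ((hyp1 (i + 1) (by omega) hi).mp hmem)
  · intro v
    rcases LR_total v with hv | hv
    · rw [dInL_apply, if_pos hv, hcount v, count_split' h s v,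
        count_eq_zero (restr2 β.sum h s) v (fun j he => not_LR hv (he ▸ hRpos j)),
        Nat.add_zero]
    · have hvL : ¬ v ∈ LSet := fun hL => not_LR hL hv
      rw [dInL_apply, if_neg hvL]
      exact (count_eq_zero (restr1 β.sum (by omega) s) v
        (fun j he => hvL (he ▸ hLpos j))).symm
  · intro a b hab
    exact hmono (show (⟨β.sum + (a : ℕ), by omega⟩ : Fin n) ≤ ⟨β.sum + (b : ℕ), by omega⟩
      from by simp [Fin.mk_le_mk]; omega)
  · intro i hi hmem
    have hm := (hyp2 (i + 1) (by omega)).mp hmem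
    have := hstrict (β.sum + i) (by omega) ((show i + 1 + β.sum = β.sum + i + 1 by omega) ▸ hm)
    exact this
  · intro v
    rcases LR_total v with hv | hv
    · have hvL : v ∈ LSet := hv
      rw [dInR_apply, if_pos hvL]
      exact (count_eq_zero (restr2 β.sum h s) v
        (fun j he => not_LR hvL (he ▸ hRpos j))).symm
    · have hvL : ¬ v ∈ LSet := fun hL => not_LR hL hv
      rw [dInR_apply, if_neg hvL, hcount v, count_split' h s v,
        count_eq_zero (restr1 β.sum (by omega) s) v (fun j he => hvL (he ▸ hLpos j)),
        Nat.zero_add]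

lemma glue_mem (β γ : List ℕ) (n : ℕ) (h : n = β.sum + γ.sum) (ps : List ℕ)
    (d : Sig →₀ ℕ)
    (hyp1 : ∀ m, 0 < m → m < β.sum → ((m ∈ psums β) ↔ m ∈ ps))
    (hyp2 : ∀ m, 0 < m → ((m ∈ psums γ) ↔ (m + β.sum) ∈ ps))
    (s1 : Fin β.sum → Sig) (s2 : Fin γ.sum → Sig)
    (h1 : s1 ∈ SeqSet Sig LSet β.sum (psums β) (dInL d))
    (h2 : s2 ∈ SeqSet Sig RSet γ.sum (psums γ) (dInR d)) :
    glue s1 s2 n h ∈ SeqSet Sig Set.univ n ps d ∧ leftCount (glue s1 s2 n h) = β.sum := by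
  obtain ⟨hA1, hm1, hstr1, hc1⟩ := h1
  obtain ⟨hA2, hm2, hstr2, hc2⟩ := h2
  have hval : ∀ j : Fin n, ((j : ℕ) < β.sum → glue s1 s2 n h j ∈ LSet)
      ∧ (¬ (j : ℕ) < β.sum → glue s1 s2 n h j ∈ RSet) := by
    intro j
    constructor
    · intro hj
      simp only [glue]
      rw [dif_pos hj]
      exact hA1 _
    · intro hj
      simp only [glue]
      rw [dif_neg hj]
      exact hA2 _
  refine ⟨⟨fun j => trivial, ?_, ?_, ?_⟩, ?_⟩
  · intro a b hab
    by_cases ha : (a : ℕ) < β.sum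
    · by_cases hb : (b : ℕ) < β.sum
      · simp only [glue]
        rw [dif_pos ha, dif_pos hb]
        exact hm1 (show (⟨(a : ℕ), ha⟩ : Fin β.sum) ≤ ⟨(b : ℕ), hb⟩ from hab)
      · exact le_of_lt (L_lt_R ((hval a).1 ha) ((hval b).2 hb))
    · have hb : ¬ (b : ℕ) < β.sum := by
        have : (a : ℕ) ≤ (b : ℕ) := hab
        omega
      simp only [glue]
      rw [dif_neg ha, dif_neg hb]
      apply hm2
      show (a : ℕ) - β.sum ≤ (b : ℕ) - β.sum
      have : (a : ℕ) ≤ (b : ℕ) := hab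
      omega
  · intro i hi hmem
    by_cases hik : i + 1 < β.sum
    · have e1 : glue s1 s2 n h ⟨i, Nat.lt_of_succ_lt hi⟩ = s1 ⟨i, by omega⟩ := by
        simp only [glue]
        rw [dif_pos (show i < β.sum by omega)]
      have e2 : glue s1 s2 n h ⟨i + 1, hi⟩ = s1 ⟨i + 1, hik⟩ := by
        simp only [glue]
        rw [dif_pos hik]
      rw [e1, e2]
      exact hstr1 i hik ((hyp1 (i + 1) (by omega) hik).mpr hmem)
    · by_cases hik2 : i + 1 = β.sum
      · have e1 : glue s1 s2 n h ⟨i, Nat.lt_of_succ_lt hi⟩ = s1 ⟨i, by omega⟩ := by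
          simp only [glue]
          rw [dif_pos (show i < β.sum by omega)]
        have e2 : glue s1 s2 n h ⟨i + 1, hi⟩ = s2 ⟨i + 1 - β.sum, by omega⟩ := by
          simp only [glue]
          rw [dif_neg (show ¬ i + 1 < β.sum by omega)]
        rw [e1, e2]
        exact L_lt_R (hA1 _) (hA2 _)
      · have hgt : β.sum < i + 1 := by omega
        have e1 : glue s1 s2 n h ⟨i, Nat.lt_of_succ_lt hi⟩ = s2 ⟨i - β.sum, by omega⟩ := by
          simp only [glue]
          rw [dif_neg (show ¬ i < β.sum by omega)]
        have e2 : glue s1 s2 n h ⟨i + 1, hi⟩ = s2 ⟨i - β.sum + 1, by omega⟩ := by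
          simp only [glue]
          rw [dif_neg (show ¬ i + 1 < β.sum by omega)]
          exact congrArg s2 (Fin.ext (by simp; omega))
        rw [e1, e2]
        refine hstr2 (i - β.sum) (by omega) ?_
        refine (hyp2 (i - β.sum + 1) (by omega)).mpr ?_
        rw [show i - β.sum + 1 + β.sum = i + 1 by omega]
        exact hmem
  · intro v
    rw [count_split' h (glue s1 s2 n h) v, restr1_glue, restr2_glue, ← hc1 v, ← hc2 v]
    conv_lhs => rw [← dInL_add_dInR d]
    rfl
  · have := card_filter_pred (σ := Sig) h (fun v => v ∈ LSet) (glue s1 s2 n h)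
      (fun j => (hval ⟨(j : ℕ), by omega⟩).1 j.2)
      (fun j hL => not_LR hL ((hval ⟨β.sum + (j : ℕ), by omega⟩).2 (by simp)))
    exact this


lemma Lc_eq (σ : Type) [LinearOrder σ] (A : Set σ) (α : List ℕ) (d : σ →₀ ℕ) :
    Lc σ A α d = ((SeqSet σ A α.sum (psums α) d).ncard : ℚ) := rfl

lemma core_card (β γ : List ℕ) (n : ℕ) (h : n = β.sum + γ.sum) (ps : List ℕ)
    (d : Sig →₀ ℕ)
    (hyp1 : ∀ m, 0 < m → m < β.sum → ((m ∈ psums β) ↔ m ∈ ps))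
    (hyp2 : ∀ m, 0 < m → ((m ∈ psums γ) ↔ (m + β.sum) ∈ ps)) :
    ({s ∈ SeqSet Sig Set.univ n ps d | leftCount s = β.sum}).ncard
      = (SeqSet Sig LSet β.sum (psums β) (dInL d)).ncard *
        (SeqSet Sig RSet γ.sum (psums γ) (dInR d)).ncard := by
  rw [← Nat.card_coe_set_eq, ← Nat.card_coe_set_eq, ← Nat.card_coe_set_eq,
    ← Nat.card_prod]
  apply Nat.card_congr
  exact {
    toFun := fun x => (⟨restr1 β.sum (by omega) x.1,
        (restr_mem β γ n h ps d hyp1 hyp2 x.1 x.2.1 x.2.2).1⟩,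
      ⟨restr2 β.sum h x.1, (restr_mem β γ n h ps d hyp1 hyp2 x.1 x.2.1 x.2.2).2⟩)
    invFun := fun y => ⟨glue y.1.1 y.2.1 n h,
      (glue_mem β γ n h ps d hyp1 hyp2 y.1.1 y.2.1 y.1.2 y.2.2).1,
      (glue_mem β γ n h ps d hyp1 hyp2 y.1.1 y.2.1 y.1.2 y.2.2).2⟩
    left_inv := fun x => Subtype.ext (glue_restr h x.1)
    right_inv := fun y => Prod.ext (Subtype.ext (restr1_glue y.1.1 y.2.1 n h))
      (Subtype.ext (restr2_glue y.1.1 y.2.1 n h)) }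

lemma per_k (α : List ℕ) (hpos : ∀ a ∈ α, 0 < a) (k : ℕ) (hk : k ≤ α.sum)
    (d : Sig →₀ ℕ) :
    (({s ∈ SeqSet Sig Set.univ α.sum (psums α) d | leftCount s = k}).ncard : ℚ)
      = ∑ p ∈ Finset.HasAntidiagonal.antidiagonal d,
          ((SeqSet Sig LSet (cutC α k).1.sum (psums (cutC α k).1) p.1).ncard : ℚ) *
          ((SeqSet Sig RSet (cutC α k).2.sum (psums (cutC α k).2) p.2).ncard : ℚ) := by
  have hβ : (cutC α k).1.sum = k := cutC_sum_fst α k hk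
  have hγ : (cutC α k).2.sum = α.sum - k := cutC_sum_snd α k hk
  have h : α.sum = (cutC α k).1.sum + (cutC α k).2.sum := by omega
  have hyp1 : ∀ m, 0 < m → m < (cutC α k).1.sum →
      ((m ∈ psums (cutC α k).1) ↔ m ∈ psums α) := by
    intro m hm hmk
    exact psums_cut_left α hpos k hk m hm (by omega)
  have hyp2 : ∀ m, 0 < m → ((m ∈ psums (cutC α k).2) ↔ (m + (cutC α k).1.sum) ∈ psums α) := by
    intro m hm
    rw [hβ]
    exact psums_cut_right α k hk m hm
  rw [Finset.sum_eq_single (dInL d, dInR d)]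
  · have hcc := core_card (cutC α k).1 (cutC α k).2 α.sum h (psums α) d hyp1 hyp2
    have hsets : {s ∈ SeqSet Sig Set.univ α.sum (psums α) d | leftCount s = k}
        = {s ∈ SeqSet Sig Set.univ α.sum (psums α) d |
            leftCount s = (cutC α k).1.sum} := by rw [hβ]
    rw [hsets]
    exact_mod_cast hcc
  · rintro ⟨p1, p2⟩ hmem hne
    by_contra h0
    rcases mul_ne_zero_iff.mp h0 with ⟨hA0, hB0⟩
    have hA := Set.nonempty_of_ncard_ne_zero (by exact_mod_cast hA0)
    have hB := Set.nonempty_of_ncard_ne_zero (by exact_mod_cast hB0)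
    obtain ⟨s1, hA1, -, -, hc1⟩ := hA
    obtain ⟨s2, hA2, -, -, hc2⟩ := hB
    have hsum : p1 + p2 = d := Finset.HasAntidiagonal.mem_antidiagonal.mp hmem
    have hp1 : p1 = dInL d := by
      ext v
      rcases LR_total v with hv | hv
      · have h2z : p2 v = 0 := by
          rw [hc2 v]
          exact count_eq_zero s2 v (fun j he => not_LR hv (he ▸ hA2 j))
        have : p1 v + p2 v = d v := by rw [← hsum]; rfl
        rw [dInL_apply, if_pos hv]
        omega
      · have hvL : ¬ v ∈ LSet := fun hL => not_LR hL hv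
        rw [dInL_apply, if_neg hvL, hc1 v]
        exact count_eq_zero s1 v (fun j he => hvL (he ▸ hA1 j))
    have hp2 : p2 = dInR d := by
      have hD := dInL_add_dInR d
      rw [← hp1] at hD
      exact add_left_cancel (hsum.trans hD.symm)
    exact hne (by rw [hp1, hp2])
  · intro hnot
    exact absurd (Finset.HasAntidiagonal.mem_antidiagonal.mpr (dInL_add_dInR d)) hnot

/-- The coproduct of a fundamental quasisymmetric function, expressed via the
splitting of the variables into two ordered alphabets (the first alphabet entirely
below the second, modelled by `Lex (ℕ ⊕ ℕ)`):
`Δ(L_{C(w)}) = Σ L_β ⊗ L_γ` over all pairs of compositions `(β, γ)` such that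
either the concatenation of `β` and `γ` is `C(w)`, or the concatenation of `β` and
`γ` with the last part of `β` merged (added) with the first part of `γ` is `C(w)`. -/
theorem fundamental_coproduct (w : List ℕ) :
    Lc (Lex (ℕ ⊕ ℕ)) Set.univ (descComp w) =
      ∑ᶠ p ∈ {p : List ℕ × List ℕ |
          (∀ a ∈ p.1, 0 < a) ∧ (∀ a ∈ p.2, 0 < a) ∧
          (p.1 ++ p.2 = descComp w ∨
            ∃ (b : List ℕ) (x y : ℕ) (g : List ℕ),
              p.1 = b ++ [x] ∧ p.2 = y :: g ∧ b ++ (x + y) :: g = descComp w)},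
        Lc (Lex (ℕ ⊕ ℕ)) {v | ∃ m : ℕ, v = toLex (Sum.inl m)} p.1 *
          Lc (Lex (ℕ ⊕ ℕ)) {v | ∃ m : ℕ, v = toLex (Sum.inr m)} p.2 := by
  set α := descComp w with hα
  have hpos : ∀ a ∈ α, 0 < a := descComp_pos w
  funext d
  -- identify the index set with the image of `cutC α` on `range (α.sum + 1)`
  have hset : {p : List ℕ × List ℕ |
      (∀ a ∈ p.1, 0 < a) ∧ (∀ a ∈ p.2, 0 < a) ∧
      (p.1 ++ p.2 = α ∨
        ∃ (b : List ℕ) (x y : ℕ) (g : List ℕ),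
          p.1 = b ++ [x] ∧ p.2 = y :: g ∧ b ++ (x + y) :: g = α)}
      = ↑((Finset.range (α.sum + 1)).image (cutC α)) := by
    ext p
    simp only [Set.mem_setOf_eq, Finset.coe_image, Set.mem_image, Finset.mem_coe,
      Finset.mem_range]
    constructor
    · rintro ⟨hp1, hp2, hcase⟩
      rcases hcase with hcat | ⟨b, x, y, g, e1, e2, e3⟩
      · refine ⟨p.1.sum, ?_, ?_⟩
        · have : α.sum = p.1.sum + p.2.sum := by rw [← hcat]; simp
          omega
        · rw [← hcat]
          exact (cutC_concat_eq p.1 p.2 hp1).trans (by simp)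
      · have hx : 0 < x := hp1 x (by rw [e1]; simp)
        have hy : 0 < y := hp2 y (by rw [e2]; simp)
        refine ⟨b.sum + x, ?_, ?_⟩
        · have : α.sum = b.sum + (x + y) + g.sum := by rw [← e3]; simp; omega
          omega
        · rw [← e3]
          rw [cutC_merge_eq b x y g hx hy, ← e1, ← e2]
    · rintro ⟨k, hk, rfl⟩
      exact ⟨cutC_pos_fst α hpos k, cutC_pos_snd α hpos k,
        cutC_concat_or_merge α k (by omega)⟩
  rw [hset, finsum_mem_coe_finset]
  have hinj : ∀ x ∈ Finset.range (α.sum + 1), ∀ y ∈ Finset.range (α.sum + 1),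
      cutC α x = cutC α y → x = y := by
    intro x hx y hy he
    have h1 := cutC_sum_fst α x (by simp at hx; omega)
    have h2 := cutC_sum_fst α y (by simp at hy; omega)
    rw [he] at h1
    omega
  rw [Finset.sum_image hinj]
  -- pass the evaluation through the finite sum
  have hev : (∑ k ∈ Finset.range (α.sum + 1),
        Lc (Lex (ℕ ⊕ ℕ)) {v | ∃ m : ℕ, v = toLex (Sum.inl m)} (cutC α k).1 *
          Lc (Lex (ℕ ⊕ ℕ)) {v | ∃ m : ℕ, v = toLex (Sum.inr m)} (cutC α k).2) d
      = ∑ k ∈ Finset.range (α.sum + 1),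
        (MvPowerSeries.coeff d)
          (Lc (Lex (ℕ ⊕ ℕ)) {v | ∃ m : ℕ, v = toLex (Sum.inl m)} (cutC α k).1 *
            Lc (Lex (ℕ ⊕ ℕ)) {v | ∃ m : ℕ, v = toLex (Sum.inr m)} (cutC α k).2) :=
    map_sum (MvPowerSeries.coeff d)
      (fun k => Lc (Lex (ℕ ⊕ ℕ)) {v | ∃ m : ℕ, v = toLex (Sum.inl m)} (cutC α k).1 *
        Lc (Lex (ℕ ⊕ ℕ)) {v | ∃ m : ℕ, v = toLex (Sum.inr m)} (cutC α k).2)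
      (Finset.range (α.sum + 1))
  rw [hev]
  -- left-hand side: fiber decomposition along leftCount
  have hfin : (SeqSet Sig Set.univ α.sum (psums α) d).Finite :=
    seq_finite d _ (fun s hs => hs.2.2.2)
  have hLHS : Lc (Lex (ℕ ⊕ ℕ)) Set.univ α d
      = ((SeqSet Sig Set.univ α.sum (psums α) d).ncard : ℚ) := rfl
  rw [hLHS, ncard_fiberwise hfin leftCount (Finset.range (α.sum + 1))
    (fun s _ => Finset.mem_range.mpr (by have := leftCount_le s; omega))]
  push_cast
  apply Finset.sum_congr rfl
  intro k hk
  have hk' : k ≤ α.sum := by simp at hk; omega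
  rw [MvPowerSeries.coeff_mul]
  exact per_k α hpos k hk' d
end

section
/- The bialgebra KPR spanned by K-Knuth classes has no antipode: there is no element S([[1]]) in the span of finitely many classes satisfying the antipode equation, since solving μ(S ⊗ id)Δ([[1]]) = ε([[1]])·1 forces S([[1]]) = −[[1]]/(1 + [[1]]), which is not a finite linear combination of basis elements. -/
/-- `shCount w v u` is the number of ways the word `u` arises as a shuffle
(interleaving) of the words `w` and `v`; thus the shuffle product
`w ⧢ v = Σ_u (shCount w v u) · u`. -/
def shCount : List ℕ → List ℕ → List ℕ → ℕ
  | [], [], [] => 1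
  | _, _, [] => 0
  | w, v, c :: u =>
      (match w with
        | a :: w' => if a = c then shCount w' v u else 0
        | [] => 0) +
      (match v with
        | b :: v' => if b = c then shCount w v' u else 0
        | [] => 0)
  termination_by w v u => u.length

/-- The largest letter of a word (`n` for an initial word on the alphabet `[n]`). -/
def maxLetter (h : List ℕ) : ℕ := h.foldr max 0

/-- The coefficient of the word `u` in the KPR product
`[[h]] · [[h']] = Σ_{w ≡ h, w' ≡ h'} w ⧢ w'[n]`, where `n = maxLetter h`
(a locally finite sum). -/
noncomputable def classProdCoeff (h h' u : List ℕ) : ℚ :=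
  ∑ᶠ p ∈ {p : List ℕ × List ℕ | KKnuth p.1 h ∧ KKnuth p.2 h'},
    (shCount p.1 (p.2.map (· + maxLetter h)) u : ℚ)

/-- An initial word: its set of letters is exactly `{1, …, k}` for some `k`. -/
def IsInitial (h : List ℕ) : Prop :=
  (∀ x ∈ h, 0 < x) ∧ ∀ x ∈ h, ∀ y : ℕ, 0 < y → y ≤ x → y ∈ h

/-! ### Auxiliary lemmas -/

lemma shCount_nil_u (w v : List ℕ) : shCount w v [] = if w = [] ∧ v = [] then 1 else 0 := by
  cases w <;> cases v <;> simp [shCount]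

lemma shCount_nn_cons (c : ℕ) (u : List ℕ) : shCount [] [] (c :: u) = 0 := by
  rw [shCount.eq_def]; rfl

lemma shCount_nil_cons (b c : ℕ) (v u : List ℕ) :
    shCount [] (b :: v) (c :: u) = if b = c then shCount [] v u else 0 := by
  rw [shCount.eq_def]; simp

lemma shCount_cons_nil (a c : ℕ) (w u : List ℕ) :
    shCount (a :: w) [] (c :: u) = if a = c then shCount w [] u else 0 := by
  rw [shCount.eq_def]; simp

lemma shCount_cons_cons (a b c : ℕ) (w v u : List ℕ) :
    shCount (a :: w) (b :: v) (c :: u) =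
      (if a = c then shCount w (b :: v) u else 0) +
      (if b = c then shCount (a :: w) v u else 0) := by
  rw [shCount.eq_def]

lemma shCount_count (u : List ℕ) : ∀ w v : List ℕ, shCount w v u ≠ 0 →
    ∀ x, u.count x = w.count x + v.count x := by
  induction u with
  | nil =>
    intro w v h x
    rw [shCount_nil_u] at h
    split at h
    · obtain ⟨rfl, rfl⟩ := ‹w = [] ∧ v = []›; simp
    · exact absurd rfl h
  | cons c u ih =>
    intro w v h x
    cases w with
    | nil =>
      cases v with
      | nil => rw [shCount_nn_cons] at h; exact absurd rfl h
      | cons b v =>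
        rw [shCount_nil_cons] at h
        split at h
        · subst ‹b = c›
          have := ih [] v h x
          simp only [List.count_cons, this]
          omega
        · exact absurd rfl h
    | cons a w =>
      cases v with
      | nil =>
        rw [shCount_cons_nil] at h
        split at h
        · subst ‹a = c›
          have := ih w [] h x
          simp only [List.count_cons, this]
          omega
        · exact absurd rfl h
      | cons b v =>
        rw [shCount_cons_cons] at h
        have h' : (if a = c then shCount w (b :: v) u else 0) ≠ 0 ∨
            (if b = c then shCount (a :: w) v u else 0) ≠ 0 := by omega
        rcases h' with h' | h'
        · have hac : a = c := by by_contra hac; simp [hac] at h'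
          subst hac
          rw [if_pos rfl] at h'
          have := ih w (b :: v) h' x
          simp only [List.count_cons, this]
          omega
        · have hbc : b = c := by by_contra hbc; simp [hbc] at h'
          subst hbc
          rw [if_pos rfl] at h'
          have := ih (a :: w) v h' x
          simp only [List.count_cons, this]
          omega

lemma shCount_right_nil (u : List ℕ) : ∀ w : List ℕ, shCount w [] u = if w = u then 1 else 0 := by
  induction u with
  | nil => intro w; cases w <;> simp [shCount]
  | cons c u ih =>
    intro w
    cases w with
    | nil => rw [shCount_nn_cons]; simp
    | cons a w' =>
      rw [shCount_cons_nil, ih]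
      by_cases hac : a = c <;> by_cases hwu : w' = u <;> simp [hac, hwu]

lemma shCount_single (u : List ℕ) : ∀ (w : List ℕ) (x : ℕ), u.Nodup →
    shCount w [x] u ≠ 0 → x ∈ u ∧ w = u.erase x := by
  induction u with
  | nil =>
    intro w x _ h
    rw [shCount_nil_u] at h
    simp at h
  | cons c u ih =>
    intro w x hu h
    cases w with
    | nil =>
      rw [shCount_nil_cons] at h
      have hxc : x = c := by by_contra hxc; simp [hxc] at h
      subst hxc
      rw [if_pos rfl, shCount_right_nil] at h
      have hu' : u = [] := by by_contra hne; simp [Ne.symm hne] at h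
      subst hu'
      exact ⟨List.mem_cons_self, by simp⟩
    | cons a w' =>
      rw [shCount_cons_cons] at h
      have h' : (if a = c then shCount w' [x] u else 0) ≠ 0 ∨
          (if x = c then shCount (a :: w') [] u else 0) ≠ 0 := by omega
      rcases h' with h' | h'
      · have hac : a = c := by by_contra hac; simp [hac] at h'
        subst hac
        rw [if_pos rfl] at h'
        obtain ⟨hxu, hw'⟩ := ih w' x hu.of_cons h'
        have hxc : x ≠ a := by
          rintro rfl
          exact (List.nodup_cons.1 hu).1 hxu
        refine ⟨List.mem_cons_of_mem _ hxu, ?_⟩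
        rw [List.erase_cons_tail (by simpa using (Ne.symm hxc)), hw']
      · have hxc : x = c := by by_contra hxc; simp [hxc] at h'
        subst hxc
        rw [if_pos rfl, shCount_right_nil] at h'
        have hwu : a :: w' = u := by by_contra hne; simp [hne] at h'
        exact ⟨List.mem_cons_self, by simp [hwu]⟩

lemma shCount_snoc (w : List ℕ) (x : ℕ) (hx : x ∉ w) : shCount w [x] (w ++ [x]) = 1 := by
  induction w with
  | nil =>
    rw [show ([] : List ℕ) ++ [x] = [x] from rfl, shCount_nil_cons]
    simp [shCount]
  | cons a w ih =>
    have hxa : x ≠ a := fun h => hx (h ▸ List.mem_cons_self)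
    rw [show (a :: w) ++ [x] = a :: (w ++ [x]) from rfl, shCount_cons_cons,
      if_pos rfl, if_neg hxa, ih (fun h => hx (List.mem_cons_of_mem _ h))]

lemma KKnuthStep.toFinset_eq {a b : List ℕ} (h : KKnuthStep a b) : a.toFinset = b.toFinset := by
  cases h <;> (ext y; simp; try tauto)

lemma KKnuth.toFinset_eq {a b : List ℕ} (h : KKnuth a b) : a.toFinset = b.toFinset := by
  induction h with
  | rel _ _ h => exact h.toFinset_eq
  | refl => rfl
  | symm _ _ _ ih => exact ih.symm
  | trans _ _ _ _ _ ih1 ih2 => exact ih1.trans ih2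

lemma kknuth_nil {w : List ℕ} (h : KKnuth w []) : w = [] := by
  have := h.toFinset_eq
  simpa using this

lemma kknuth_one {w : List ℕ} (h : KKnuth w [1]) : w ≠ [] ∧ ∀ x ∈ w, x = 1 := by
  have hf := h.toFinset_eq
  simp only [List.toFinset_cons, List.toFinset_nil, insert_empty_eq] at hf
  constructor
  · rintro rfl
    exact absurd hf.symm (Finset.singleton_ne_empty 1)
  · intro x hx
    have : x ∈ w.toFinset := List.mem_toFinset.2 hx
    rw [hf] at this
    simpa using this

lemma le_maxLetter {x : ℕ} {l : List ℕ} (h : x ∈ l) : x ≤ maxLetter l := by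
  induction l with
  | nil => simp at h
  | cons a t ih =>
    rcases List.mem_cons.1 h with rfl | h
    · exact le_max_left _ _
    · exact le_trans (ih h) (le_max_right _ _)

lemma maxLetter_eq_sup (l : List ℕ) : maxLetter l = l.toFinset.sup id := by
  induction l with
  | nil => rfl
  | cons a t ih =>
    rw [List.toFinset_cons, Finset.sup_insert, ← ih]
    rfl

lemma maxLetter_congr {a b : List ℕ} (h : a.toFinset = b.toFinset) :
    maxLetter a = maxLetter b := by
  rw [maxLetter_eq_sup, maxLetter_eq_sup, h]

lemma maxLetter_range' : ∀ m s : ℕ, maxLetter (List.range' s m) = if m = 0 then 0 else s + m - 1 := by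
  intro m
  induction m with
  | zero => intro s; rfl
  | succ m ih =>
    intro s
    rw [List.range'_succ]
    show max s (maxLetter (List.range' (s + 1) m)) = _
    rw [ih]
    rcases Nat.eq_zero_or_pos m with rfl | hm
    · simp
    · rw [if_neg (by omega), if_neg (by omega), Nat.max_eq_right (by omega)]
      omega

lemma maxLetter_range_one (m : ℕ) : maxLetter (List.range' 1 m) = m := by
  rw [maxLetter_range']
  rcases Nat.eq_zero_or_pos m with rfl | hm
  · simp
  · simp; omega

/-- Evaluate a `finsum` over a set supported at a single point. -/
lemma finsum_mem_single_point {α : Type*} {S : Set α} {f : α → ℚ} {a : α} (ha : a ∈ S)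
    (h : ∀ x ∈ S, x ≠ a → f x = 0) : ∑ᶠ x ∈ S, f x = f a := by
  rw [finsum_mem_def]
  rw [finsum_eq_single _ a ?_]
  · exact Set.indicator_of_mem ha f
  · intro x hx
    by_cases hxS : x ∈ S
    · rw [Set.indicator_of_mem hxS]; exact h x hxS hx
    · exact Set.indicator_of_notMem hxS f

open scoped Classical in
lemma cpc_nil (h u : List ℕ) : classProdCoeff h [] u = if KKnuth u h then 1 else 0 := by
  unfold classProdCoeff
  by_cases hk : KKnuth u h
  · rw [if_pos hk]
    have hside : ∀ x ∈ {p : List ℕ × List ℕ | KKnuth p.1 h ∧ KKnuth p.2 []},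
        x ≠ ((u, ([] : List ℕ)) : List ℕ × List ℕ) →
        (shCount x.1 (x.2.map (· + maxLetter h)) u : ℚ) = 0 := by
      rintro ⟨p1, p2⟩ ⟨hp1, hp2⟩ hne
      have hp2e : p2 = [] := kknuth_nil hp2
      subst hp2e
      simp only [List.map_nil, shCount_right_nil]
      rcases eq_or_ne p1 u with rfl | hne'
      · exact absurd rfl hne
      · simp [hne']
    have hmem0 : ((u, ([] : List ℕ)) : List ℕ × List ℕ) ∈
        {p : List ℕ × List ℕ | KKnuth p.1 h ∧ KKnuth p.2 []} := ⟨hk, Relation.EqvGen.refl _⟩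
    rw [finsum_mem_single_point hmem0 hside]
    simp [shCount_right_nil]
  · rw [if_neg hk]
    apply finsum_mem_of_eqOn_zero
    rintro ⟨p1, p2⟩ ⟨hp1, hp2⟩
    have hp2e : p2 = [] := kknuth_nil hp2
    subst hp2e
    show (shCount p1 (List.map (· + maxLetter h) []) u : ℚ) = 0
    simp only [List.map_nil, shCount_right_nil]
    rcases eq_or_ne p1 u with rfl | hne'
    · exact absurd hp1 hk
    · simp [hne']

lemma cpc_one_nil (h : List ℕ) : classProdCoeff h [1] [] = 0 := by
  unfold classProdCoeff
  apply finsum_mem_of_eqOn_zero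
  rintro ⟨p1, p2⟩ ⟨hp1, hp2⟩
  obtain ⟨hp2ne, -⟩ := kknuth_one hp2
  show (shCount p1 (List.map (· + maxLetter h) p2) [] : ℚ) = 0
  rw [shCount_nil_u]
  simp [hp2ne]

open scoped Classical in
lemma cpc_one (h : List ℕ) (k : ℕ) :
    classProdCoeff h [1] (List.range' 1 (k + 1)) =
      if KKnuth (List.range' 1 k) h then 1 else 0 := by
  have hnodup : (List.range' 1 (k + 1)).Nodup := List.nodup_range'
  have hconcat : List.range' 1 (k + 1) = List.range' 1 k ++ [1 + k] := List.range'_1_concat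
  have hknotmem : (1 + k) ∉ List.range' 1 k := by
    intro hmem
    rw [List.mem_range'_1] at hmem
    omega
  -- key claim : nonvanishing forces the single point
  have key : ∀ p : List ℕ × List ℕ, KKnuth p.1 h → KKnuth p.2 [1] →
      (shCount p.1 (p.2.map (· + maxLetter h)) (List.range' 1 (k + 1)) : ℚ) ≠ 0 →
      p = (List.range' 1 k, [1]) ∧ KKnuth (List.range' 1 k) h := by
    rintro ⟨p1, p2⟩ hp1 hp2 hne
    have hne' : shCount p1 (p2.map (· + maxLetter h)) (List.range' 1 (k + 1)) ≠ 0 := by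
      exact_mod_cast hne
    obtain ⟨hp2ne, hp2one⟩ := kknuth_one hp2
    set n := maxLetter h with hn
    -- every letter of the shifted word is 1 + n
    have hmap : ∀ y ∈ p2.map (· + n), y = 1 + n := by
      intro y hy
      obtain ⟨z, hz, rfl⟩ := List.mem_map.1 hy
      rw [hp2one z hz]
    -- p2 has length 1
    have hcount := shCount_count _ _ _ hne' (1 + n)
    have hcount1 : (p2.map (· + n)).count (1 + n) = p2.length := by
      rw [List.count_eq_length.2 (fun y hy => (hmap y hy).symm)]
      simp
    have hule : (List.range' 1 (k + 1)).count (1 + n) ≤ 1 :=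
      List.nodup_iff_count_le_one.1 hnodup _
    have hlen1 : p2.length = 1 := by
      have hlenpos : 0 < p2.length := List.length_pos_iff.2 hp2ne
      omega
    have hp2eq : p2 = [1] := by
      obtain ⟨z, hz⟩ := List.length_eq_one_iff.1 hlen1
      rw [hz]
      rw [hp2one z (hz ▸ List.mem_cons_self)]
    subst hp2eq
    have hmapeq : [1].map (· + n) = [1 + n] := by simp
    rw [hmapeq] at hne'
    obtain ⟨hmem, hp1eq⟩ := shCount_single _ _ _ hnodup hne'
    -- n + 1 ≤ k + 1
    have hnk : 1 + n < 1 + (k + 1) := (List.mem_range'_1.1 hmem).2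
    -- maxLetter p1 = n
    have hmaxp1 : maxLetter p1 = n := maxLetter_congr hp1.toFinset_eq
    -- n = k
    have hnk' : n = k := by
      by_contra hneq
      have hkmem : (1 + k) ∈ List.range' 1 (k + 1) := by
        rw [List.mem_range'_1]; omega
      have hmem' : (1 + k) ∈ p1 := by
        rw [hp1eq]
        exact (List.mem_erase_of_ne (by omega)).2 hkmem
      have := le_maxLetter hmem'
      omega
    rw [hnk'] at hp1eq
    have hp1' : p1 = List.range' 1 k := by
      rw [hp1eq, hconcat, List.erase_append_right _ hknotmem]
      simp
    exact ⟨by rw [hp1'], hp1' ▸ hp1⟩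
  unfold classProdCoeff
  by_cases hk : KKnuth (List.range' 1 k) h
  · rw [if_pos hk]
    have hside : ∀ x ∈ {p : List ℕ × List ℕ | KKnuth p.1 h ∧ KKnuth p.2 [1]},
        x ≠ ((List.range' 1 k, [1]) : List ℕ × List ℕ) →
        (shCount x.1 (x.2.map (· + maxLetter h)) (List.range' 1 (k + 1)) : ℚ) = 0 := by
      rintro ⟨p1, p2⟩ ⟨hp1, hp2⟩ hne
      by_contra hne0
      exact hne (key _ hp1 hp2 hne0).1
    have hmem0 : ((List.range' 1 k, [1]) : List ℕ × List ℕ) ∈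
        {p : List ℕ × List ℕ | KKnuth p.1 h ∧ KKnuth p.2 [1]} := ⟨hk, Relation.EqvGen.refl _⟩
    rw [finsum_mem_single_point hmem0 hside]
    have hmax : maxLetter h = k := by
      rw [← maxLetter_congr hk.toFinset_eq, maxLetter_range_one]
    show (shCount (List.range' 1 k) (List.map (· + maxLetter h) [1]) (List.range' 1 (k+1)) : ℚ) = 1
    rw [hmax, show ([1] : List ℕ).map (· + k) = [1 + k] by simp, hconcat,
      shCount_snoc _ _ hknotmem]
    norm_num
  · rw [if_neg hk]
    apply finsum_mem_of_eqOn_zero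
    rintro ⟨p1, p2⟩ ⟨hp1, hp2⟩
    show (shCount p1 (List.map (· + maxLetter h) p2) (List.range' 1 (k+1)) : ℚ) = 0
    by_contra hne0
    exact hk (key _ hp1 hp2 hne0).2

lemma kknuth_range_one_iff (k : ℕ) : KKnuth (List.range' 1 (k + 1)) [1] ↔ k = 0 := by
  constructor
  · intro h
    by_contra hk
    have h2 : 2 ∈ List.range' 1 (k + 1) := by rw [List.mem_range'_1]; omega
    have := h.toFinset_eq
    have : (2 : ℕ) ∈ ([1] : List ℕ).toFinset := by
      rw [← this]
      exact List.mem_toFinset.2 h2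
    simp at this
  · rintro rfl
    exact Relation.EqvGen.refl _

lemma kknuth_not_nil_one : ¬ KKnuth [] [1] := by
  intro h
  have hf := h.toFinset_eq
  simp only [List.toFinset_nil, List.toFinset_cons, insert_empty_eq] at hf
  exact (Finset.singleton_ne_empty 1) hf.symm

open scoped Classical in
/-- The bialgebra `KPR` has no antipode.  The antipode equation
`μ(S ⊗ id)Δ([[1]]) = ε([[1]]) · 1` applied to the class `[[1]]` of the one-letter
word `1` (whose coproduct is `∅⊗[[1]] + [[1]]⊗[[1]] + [[1]]⊗∅`) reduces to
`S([[1]]) · ([[1]] + ∅) = −[[1]]`; there is no finite linear combination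
`S([[1]]) = Σ_h s_h [[h]]` of classes of initial words satisfying it
(word by word: the coefficient of every word `u` must match). -/
theorem kpr_has_no_antipode :
    ¬ ∃ s : List ℕ →₀ ℚ, (∀ h ∈ s.support, IsInitial h) ∧
      ∀ u : List ℕ,
        (∑ h ∈ s.support, s h * (classProdCoeff h [1] u + classProdCoeff h [] u)) =
          - (if KKnuth u [1] then (1 : ℚ) else 0) := by
  classical
  rintro ⟨s, -, heq⟩
  set T : ℕ → ℚ := fun k => ∑ h ∈ s.support, if KKnuth (List.range' 1 k) h then s h else 0
    with hT
  have hT0 : T 0 = 0 := by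
    have h0 := heq []
    rw [if_neg kknuth_not_nil_one] at h0
    simp only [cpc_one_nil, cpc_nil, zero_add, neg_zero] at h0
    rw [hT]
    simpa [mul_ite] using h0
  have hTk : ∀ k : ℕ, T k + T (k + 1) = -(if k = 0 then 1 else 0) := by
    intro k
    have h1 := heq (List.range' 1 (k + 1))
    simp only [cpc_one, cpc_nil, mul_add, Finset.sum_add_distrib] at h1
    rw [hT]
    simp only [mul_ite, mul_one, mul_zero] at h1 ⊢
    rw [h1]
    by_cases hk : k = 0
    · subst hk
      rw [if_pos ((kknuth_range_one_iff 0).2 rfl), if_pos rfl]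
    · rw [if_neg (fun h => hk ((kknuth_range_one_iff k).1 h)), if_neg hk]
  have hsign : ∀ k : ℕ, T (k + 1) = (-1 : ℚ) ^ (k + 1) := by
    intro k
    induction k with
    | zero =>
      have := hTk 0
      rw [hT0, if_pos rfl] at this
      simpa using this
    | succ m ih =>
      have := hTk (m + 1)
      rw [if_neg (Nat.succ_ne_zero m), ih] at this
      have : T (m + 1 + 1) = -(-1 : ℚ) ^ (m + 1) := by linarith
      rw [this, pow_succ]
      ring
  set N := s.support.sup maxLetter + 1 with hN
  have hTN : T N = 0 := by
    rw [hT]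
    apply Finset.sum_eq_zero
    intro h hh
    rw [if_neg]
    intro hkk
    have hNmem : N ∈ List.range' 1 N := by rw [List.mem_range'_1]; omega
    have : N ∈ h := by
      have := hkk.toFinset_eq
      have hN' : N ∈ h.toFinset := by
        rw [← this]
        exact List.mem_toFinset.2 hNmem
      exact List.mem_toFinset.1 hN'
    have hle : N ≤ maxLetter h := le_maxLetter this
    have hsup : maxLetter h ≤ s.support.sup maxLetter := Finset.le_sup hh
    omega
  have : T N = (-1 : ℚ) ^ N := by
    rw [hN]
    exact hsign _
  rw [hTN] at this
  have : ((-1 : ℚ) ^ N) ≠ 0 := by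
    apply pow_ne_zero; norm_num
  exact this (by linarith)
end
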